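/- arXiv:1103.4391 — 6 statements merged into one kernel-verified Lean document; each statement's English description precedes it below -/
import Mathlib

section
/- The set of polynomial families of h-invariant elements modulo the ideals I_t is closed under multiplication. Precisely: suppose u, v : K → U(g) are polynomial maps, i.e. u(t) = Σ_{k=0}^n t^k a_k and v(t) = Σ_{k=0}^m t^k b_k for fixed a_k, b_k ∈ U(g), such that for every t ∈ K and every H ∈ h one has ι(H)·u(t) − u(t)·ι(H) ∈ I_t and ι(H)·v(t) − v(t)·ι(H) ∈ I_t. Then there exists a polynomial map w : K → U(g), w(t) = Σ_{k=0}^N t^k c_k with all c_k ∈ M, such that for every t ∈ K: w(t) − u(t)·v(t) ∈ I_t, and ι(H)·w(t) − w(t)·ι(H) ∈ I_t for every H ∈ h. (Paper's Lemma 6.4: P_(t)((U(g)/U(g)h_{tλ})^h) is an algebra.) -/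
/-!
Every family `t ↦ t ^ k • x` is congruent modulo `I_t` to a polynomial family with coefficients
in `M`. Indeed, by the spanning half of Poincaré–Birkhoff–Witt, `U(g)` is spanned by words
`ι(Q_{i₁}) ⋯ ι(Q_{i_r}) ι(H₁) ⋯ ι(H_s)` with `i₁ ≤ ⋯ ≤ i_r` and `Hⱼ ∈ h`; the `Q`-part is a
monomial of `M`, and since `λ` kills `[h, h]` the left ideal `I_t` is stable under right
multiplication by `ι(h)`, so each trailing `ι(H)` may be replaced by the scalar `-t λ(H)`.
Applied to the polynomial family `u v` this gives `w`. Invariance modulo `I_t` passes to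
products and along congruences modulo `I_t`, so `w` is invariant because `u` and `v` are.
-/

noncomputable section

open UniversalEnvelopingAlgebra

/-- The left ideal `I_t = U(g)·h_{tλ}` of `U(g)` generated by the elements
`ι(H) + t·λ(H)·1`, `H ∈ h`. -/
def It {g : Type*} [LieRing g] [LieAlgebra ℝ g] (h : LieSubalgebra ℝ g)
    (lam : h →ₗ[ℝ] ℝ) (t : ℝ) : Ideal (UniversalEnvelopingAlgebra ℝ g) :=
  Ideal.span {x | ∃ H : h, x = ι ℝ (H : g) + (t * lam H) • 1}

/-- The linear span `M` of the ordered monomials `ι(Q₁)^{α₁} ⋯ ι(Q_p)^{α_p}`, `α ∈ ℕ^p`,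
in the basis `Q` of the complement `q`. -/
def Mspan {g : Type*} [LieRing g] [LieAlgebra ℝ g] {q : Submodule ℝ g} {p : ℕ}
    (Q : Module.Basis (Fin p) ℝ q) : Submodule ℝ (UniversalEnvelopingAlgebra ℝ g) :=
  Submodule.span ℝ {u | ∃ α : Fin p → ℕ,
    u = (List.ofFn fun i => (ι ℝ ((Q i : q) : g)) ^ α i).prod}

open Submodule

namespace List

lemma prod_map_eq_prod_ofFn_pow_count {M : Type*} [Monoid M] {p : ℕ} {ℓ : List (Fin p)}
    (hℓ : ℓ.Pairwise (· ≤ ·)) (f : Fin p → M) :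
    (ℓ.map f).prod = (ofFn fun i => f i ^ ℓ.count i).prod := by
  have hperm : ℓ.Perm (ofFn fun i => replicate (ℓ.count i) i).flatten :=
    perm_iff_count.2 fun a => by simp [count_flatten, count_replicate, sum_ofFn]
  have hsorted : (ofFn fun i => replicate (ℓ.count i) i).flatten.Pairwise (· ≤ ·) := by
    simp only [pairwise_flatten, pairwise_ofFn, forall_mem_ofFn_iff]
    refine ⟨fun i => pairwise_replicate_of_refl, fun i j hij x hx y hy => ?_⟩
    rw [eq_of_mem_replicate hx, eq_of_mem_replicate hy]
    exact hij.le
  conv_lhs => rw [hperm.eq_of_pairwise' hℓ hsorted]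
  simp [map_flatten, prod_flatten, map_ofFn, Function.comp_def]

lemma exists_eq_map_inl_append_map_inr {α X : Type*} [Preorder α] {ℓ : List (α ⊕ X)}
    (hℓ : ℓ.Pairwise fun a b =>
      Sum.elim ((↑) : α → WithTop α) (fun _ => ⊤) a ≤ Sum.elim (↑) (fun _ => ⊤) b) :
    ∃ (ℓ₁ : List α) (ℓ₂ : List X), ℓ₁.Pairwise (· ≤ ·) ∧ ℓ = ℓ₁.map Sum.inl ++ ℓ₂.map Sum.inr := by
  induction ℓ with
  | nil => exact ⟨[], [], .nil, rfl⟩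
  | cons a ℓ ih =>
    obtain ⟨ha, hℓ⟩ := pairwise_cons.1 hℓ
    obtain ⟨ℓ₁, ℓ₂, hs, rfl⟩ := ih hℓ
    rcases a with i | x
    · refine ⟨i :: ℓ₁, ℓ₂, pairwise_cons.2 ⟨fun j hj => ?_, hs⟩, rfl⟩
      simpa using ha (Sum.inl j) (by simp [hj])
    · obtain rfl : ℓ₁ = [] := eq_nil_iff_forall_not_mem.2 fun j hj => by
        simpa using ha (Sum.inl j) (by simp [hj])
      exact ⟨[], x :: ℓ₂, .nil, rfl⟩

section Inversions

variable {σ α : Type*} [LinearOrder α] (κ : σ → α)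

def invCount : List σ → ℕ
  | [] => 0
  | a :: l => l.countP (fun b => κ b < κ a) + invCount l

lemma invCount_append_cons_cons_lt {x y : σ} (hyx : κ y < κ x) (A B : List σ) :
    invCount κ (A ++ y :: x :: B) < invCount κ (A ++ x :: y :: B) := by
  induction A with
  | nil => simp [invCount, hyx, lt_asymm hyx]; omega
  | cons a A ih =>
    simp only [cons_append, invCount, ((Perm.swap x y B).append_left A).countP_eq]
    omega

lemma exists_eq_append_cons_cons_of_not_pairwise {ℓ : List σ}
    (hℓ : ¬ ℓ.Pairwise fun a b => κ a ≤ κ b) :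
    ∃ A B x y, κ y < κ x ∧ ℓ = A ++ x :: y :: B := by
  induction ℓ with
  | nil => simp at hℓ
  | cons a ℓ ih =>
    by_cases hs : ℓ.Pairwise fun a b => κ a ≤ κ b
    · obtain ⟨b, hb, hba⟩ : ∃ b ∈ ℓ, κ b < κ a := by simpa [pairwise_cons, hs] using hℓ
      obtain _ | ⟨c, ℓ⟩ := ℓ
      · simp at hb
      refine ⟨[], ℓ, a, c, ?_, rfl⟩
      rcases mem_cons.1 hb with rfl | hb
      · exact hba
      · exact lt_of_le_of_lt (rel_of_pairwise_cons hs hb) hba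
    · obtain ⟨A, B, x, y, hxy, rfl⟩ := ih hs
      exact ⟨a :: A, B, x, y, hxy, rfl⟩

end Inversions

end List

attribute [local instance] LieRing.ofAssociativeRing

section Spanning

variable (R : Type*) [CommRing R] {g : Type*} [LieRing g] [LieAlgebra R g] {σ : Type*}

def wordProd (β : σ → g) (ℓ : List σ) : UniversalEnvelopingAlgebra R g :=
  (ℓ.map fun i => ι R (β i)).prod

variable {R} (β : σ → g)

@[simp] lemma wordProd_nil : wordProd R β [] = 1 := rfl

@[simp] lemma wordProd_cons (i : σ) (ℓ : List σ) :
    wordProd R β (i :: ℓ) = ι R (β i) * wordProd R β ℓ := List.prod_cons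

@[simp] lemma wordProd_append (ℓ₁ ℓ₂ : List σ) :
    wordProd R β (ℓ₁ ++ ℓ₂) = wordProd R β ℓ₁ * wordProd R β ℓ₂ := by
  simp [wordProd]

@[simp] lemma wordProd_map {τ : Type*} (f : τ → σ) (ℓ : List τ) :
    wordProd R β (ℓ.map f) = wordProd R (β ∘ f) ℓ := by
  simp [wordProd, Function.comp_def]

lemma wordProd_append_cons_cons (A B : List σ) (x y : σ) :
    wordProd R β (A ++ x :: y :: B) =
      wordProd R β (A ++ y :: x :: B) + wordProd R β A * ι R ⁅β x, β y⁆ * wordProd R β B := by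
  simp only [wordProd_append, wordProd_cons, LieHom.map_lie, Ring.lie_def]
  noncomm_ring

lemma iota_mem_span_range (hβ : span R (Set.range β) = ⊤) (y : g) :
    ι R y ∈ span R (Set.range fun i => ι R (β i)) := by
  have := apply_mem_span_image_of_mem_span (ι R).toLinearMap (hβ ▸ mem_top : y ∈ span R _)
  rwa [← Set.range_comp] at this

lemma span_wordProd_eq_top (hβ : span R (Set.range β) = ⊤) :
    span R (Set.range (wordProd R β)) = ⊤ := by
  set T := span R (Set.range (wordProd R β))
  have hmul : ∀ a ∈ T, ∀ b ∈ T, a * b ∈ T := by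
    intro a ha b hb
    have hab := mul_mem_mul ha hb
    rw [span_mul_span] at hab
    refine span_le.2 ?_ hab
    rintro _ ⟨_, ⟨ℓ₁, rfl⟩, _, ⟨ℓ₂, rfl⟩, rfl⟩
    exact subset_span ⟨ℓ₁ ++ ℓ₂, wordProd_append β ℓ₁ ℓ₂⟩
  have hι : ∀ y, ι R y ∈ T := fun y =>
    span_le.2 (by rintro _ ⟨i, rfl⟩; exact subset_span ⟨[i], by simp⟩)
      (iota_mem_span_range β hβ y)
  rw [eq_top_iff]
  rintro x -
  obtain ⟨x, rfl⟩ : ∃ y, mkAlgHom R g y = x := ⟨Quot.out x, Quot.out_eq x⟩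
  induction x using TensorAlgebra.induction with
  | algebraMap r =>
    rw [AlgHom.commutes, Algebra.algebraMap_eq_smul_one]
    exact smul_mem _ r (subset_span ⟨[], rfl⟩)
  | ι y => exact hι y
  | mul a b ha hb => rw [map_mul]; exact hmul _ ha _ hb
  | add a b ha hb => rw [map_add]; exact add_mem ha hb

variable {α : Type*} [LinearOrder α] (κ : σ → α)

theorem wordProd_mem_span_sorted (hβ : span R (Set.range β) = ⊤) (ℓ : List σ) :
    wordProd R β ℓ ∈
      span R (wordProd R β '' {ℓ | ℓ.Pairwise fun a b => κ a ≤ κ b}) := by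
  by_cases hs : ℓ.Pairwise fun a b => κ a ≤ κ b
  · exact subset_span ⟨ℓ, hs, rfl⟩
  obtain ⟨A, B, x, y, hyx, rfl⟩ := List.exists_eq_append_cons_cons_of_not_pairwise κ hs
  -- `x y = y x + [x, y]`: the swapped word has fewer inversions, and the bracket term,
  -- expanded in the letters `β`, is a combination of shorter words
  have hbracket := apply_mem_span_image_of_mem_span
    (LinearMap.mulRight R (wordProd R β B) ∘ₗ LinearMap.mulLeft R (wordProd R β A))
    (iota_mem_span_range β hβ ⁅β x, β y⁆)
  rw [wordProd_append_cons_cons]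
  refine add_mem (wordProd_mem_span_sorted hβ _) (span_le.2 ?_ hbracket)
  rintro _ ⟨_, ⟨i, rfl⟩, rfl⟩
  simpa [mul_assoc] using wordProd_mem_span_sorted hβ (A ++ i :: B)
termination_by (ℓ.length, ℓ.invCount κ)
decreasing_by
  all_goals subst_vars
  · rw [show (A ++ y :: x :: B).length = (A ++ x :: y :: B).length by simp]
    exact Prod.Lex.right _ (List.invCount_append_cons_cons_lt κ hyx A B)
  · exact Prod.Lex.left _ _ (by simp)

theorem span_wordProd_sorted_eq_top (hβ : span R (Set.range β) = ⊤) :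
    span R (wordProd R β '' {ℓ | ℓ.Pairwise fun a b => κ a ≤ κ b}) = ⊤ := by
  rw [eq_top_iff, ← span_wordProd_eq_top β hβ, span_le]
  rintro _ ⟨ℓ, rfl⟩
  exact wordProd_mem_span_sorted β κ hβ ℓ

end Spanning

section PolynomialFamilies

variable {K A : Type*} [CommSemiring K] [AddCommMonoid A] [Module K A]

def polyFamilies (S : Submodule K A) : Submodule K (K → A) :=
  span K {f | ∃ k, ∃ c ∈ S, f = fun t => t ^ k • c}

variable {S : Submodule K A}

lemma pow_smul_mem_polyFamilies (k : ℕ) {c : A} (hc : c ∈ S) :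
    (fun t : K => t ^ k • c) ∈ polyFamilies S :=
  subset_span ⟨k, c, hc, rfl⟩

lemma sum_pow_smul_mem_polyFamilies (s : Finset ℕ) {c : ℕ → A} (hc : ∀ k ∈ s, c k ∈ S) :
    (fun t : K => ∑ k ∈ s, t ^ k • c k) ∈ polyFamilies S := by
  rw [← Finset.sum_fn]
  exact sum_mem fun k hk => pow_smul_mem_polyFamilies k (hc k hk)

lemma polyFamilies_mono {T : Submodule K A} (hST : S ≤ T) : polyFamilies S ≤ polyFamilies T :=
  span_mono fun _ ⟨k, c, hc, hf⟩ => ⟨k, c, hST hc, hf⟩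

lemma smul_id_mem_polyFamilies {f : K → A} (hf : f ∈ polyFamilies S) :
    (fun t => t • f t) ∈ polyFamilies S := by
  have : polyFamilies S ≤ (polyFamilies S).comap (LinearMap.pi fun t => t • LinearMap.proj t) :=
    span_le.2 <| by
      rintro _ ⟨k, c, hc, rfl⟩
      show (fun t => t • t ^ k • c) ∈ polyFamilies S
      convert pow_smul_mem_polyFamilies (k + 1) hc using 1
      ext t
      simp [pow_succ', mul_smul]
  exact this hf

lemma mul_mem_polyFamilies {A : Type*} [Semiring A] [Algebra K A] {S T : Submodule K A}
    {f₁ f₂ : K → A} (h₁ : f₁ ∈ polyFamilies S) (h₂ : f₂ ∈ polyFamilies T) :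
    f₁ * f₂ ∈ polyFamilies (S * T) := by
  have h := mul_mem_mul h₁ h₂
  rw [polyFamilies, polyFamilies, span_mul_span] at h
  refine span_le.2 ?_ h
  rintro _ ⟨_, ⟨j, a, ha, rfl⟩, _, ⟨k, b, hb, rfl⟩, rfl⟩
  show (fun t => t ^ j • a * t ^ k • b) ∈ polyFamilies (S * T)
  convert pow_smul_mem_polyFamilies (j + k) (mul_mem_mul ha hb) using 1
  ext t
  simp only [smul_mul_smul_comm, pow_add]

lemma exists_finsupp_of_mem_polyFamilies {f : K → A} (hf : f ∈ polyFamilies S) :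
    ∃ c : ℕ →₀ A, (∀ k, c k ∈ S) ∧ f = fun t => c.sum fun k x => t ^ k • x := by
  induction hf using span_induction with
  | mem f hf =>
    obtain ⟨k, c, hc, rfl⟩ := hf
    refine ⟨Finsupp.single k c, fun j => ?_, by simp⟩
    rw [Finsupp.single_apply]; split_ifs <;> simp [hc]
  | zero => exact ⟨0, by simp, by ext; simp⟩
  | add f₁ f₂ _ _ ih₁ ih₂ =>
    obtain ⟨c₁, hc₁, rfl⟩ := ih₁
    obtain ⟨c₂, hc₂, rfl⟩ := ih₂
    refine ⟨c₁ + c₂, fun k => add_mem (hc₁ k) (hc₂ k), ?_⟩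
    ext t
    simp [Finsupp.sum_add_index', smul_add]
  | smul r f _ ih =>
    obtain ⟨c, hc, rfl⟩ := ih
    refine ⟨r • c, fun k => smul_mem _ r (hc k), ?_⟩
    ext t
    simp [Finsupp.sum_smul_index', Finsupp.smul_sum, smul_comm r]

lemma exists_eq_sum_range_of_mem_polyFamilies {f : K → A} (hf : f ∈ polyFamilies S) :
    ∃ (N : ℕ) (c : ℕ → A), (∀ k, c k ∈ S) ∧
      ∀ t, f t = ∑ k ∈ Finset.range (N + 1), t ^ k • c k := by
  obtain ⟨c, hc, rfl⟩ := exists_finsupp_of_mem_polyFamilies hf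
  refine ⟨c.support.sup id, c, hc, fun t => Finsupp.sum_of_support_subset c (fun k hk => ?_) _
    (fun _ _ => smul_zero _)⟩
  exact Finset.mem_range_succ_iff.2 (Finset.le_sup (f := id) hk)

end PolynomialFamilies

section Invariance

variable {g : Type*} [LieRing g] [LieAlgebra ℝ g] (h : LieSubalgebra ℝ g) (lam : h →ₗ[ℝ] ℝ)
  (t : ℝ)

def IsInvariantMod (x : UniversalEnvelopingAlgebra ℝ g) : Prop :=
  ∀ H : h, ι ℝ (H : g) * x - x * ι ℝ (H : g) ∈ It h lam t

variable {h lam t}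

lemma iota_add_smul_one_mem_It (H : h) : ι ℝ (H : g) + (t * lam H) • 1 ∈ It h lam t :=
  Ideal.subset_span ⟨H, rfl⟩

lemma mul_mem_It_of_isInvariantMod {x v : UniversalEnvelopingAlgebra ℝ g}
    (hx : x ∈ It h lam t) (hv : IsInvariantMod h lam t v) : x * v ∈ It h lam t := by
  induction hx using Submodule.span_induction with
  | mem x hx =>
    obtain ⟨H, rfl⟩ := hx
    have : (ι ℝ (H : g) + (t * lam H) • 1) * v =
        (ι ℝ (H : g) * v - v * ι ℝ (H : g)) + v * (ι ℝ (H : g) + (t * lam H) • 1) := by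
      simp only [add_mul, mul_add, smul_mul_assoc, mul_smul_comm, one_mul, mul_one]
      abel
    rw [this]
    exact add_mem (hv H) (Ideal.mul_mem_left _ v (iota_add_smul_one_mem_It H))
  | zero => simp
  | add x y _ _ hx hy => rw [add_mul]; exact add_mem hx hy
  | smul r x _ hx => rw [smul_eq_mul, mul_assoc]; exact Ideal.mul_mem_left _ r hx

lemma isInvariantMod_iota (hlam : ∀ H₁ H₂ : h, lam ⁅H₁, H₂⁆ = 0) (H : h) :
    IsInvariantMod h lam t (ι ℝ (H : g)) := fun H' => by
  -- `[ι H', ι H] = ι [H', H]` is itself a generator of `I_t`, since `λ` kills brackets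
  convert iota_add_smul_one_mem_It (t := t) ⁅H', H⁆ using 1
  rw [hlam, mul_zero, zero_smul, add_zero, LieSubalgebra.coe_bracket, LieHom.map_lie,
    Ring.lie_def]

lemma IsInvariantMod.mul {u v : UniversalEnvelopingAlgebra ℝ g} (hu : IsInvariantMod h lam t u)
    (hv : IsInvariantMod h lam t v) : IsInvariantMod h lam t (u * v) := fun H => by
  have : ι ℝ (H : g) * (u * v) - u * v * ι ℝ (H : g) =
      (ι ℝ (H : g) * u - u * ι ℝ (H : g)) * v + u * (ι ℝ (H : g) * v - v * ι ℝ (H : g)) := by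
    noncomm_ring
  rw [this]
  exact add_mem (mul_mem_It_of_isInvariantMod (hu H) hv) (Ideal.mul_mem_left _ u (hv H))

lemma IsInvariantMod.of_sub_mem (hlam : ∀ H₁ H₂ : h, lam ⁅H₁, H₂⁆ = 0)
    {u w : UniversalEnvelopingAlgebra ℝ g} (hu : IsInvariantMod h lam t u)
    (hwu : w - u ∈ It h lam t) : IsInvariantMod h lam t w := fun H => by
  have : ι ℝ (H : g) * w - w * ι ℝ (H : g) =
      (ι ℝ (H : g) * (w - u) - (w - u) * ι ℝ (H : g)) + (ι ℝ (H : g) * u - u * ι ℝ (H : g)) := by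
    noncomm_ring
  rw [this]
  exact add_mem (sub_mem (Ideal.mul_mem_left _ _ hwu)
    (mul_mem_It_of_isInvariantMod hwu (isInvariantMod_iota hlam H))) (hu H)

end Invariance

section Reduction

variable {g : Type*} [LieRing g] [LieAlgebra ℝ g] (h : LieSubalgebra ℝ g) (lam : h →ₗ[ℝ] ℝ)
  {q : Submodule ℝ g} {p : ℕ} (Q : Module.Basis (Fin p) ℝ q)

def idealFamilies : Submodule ℝ (ℝ → UniversalEnvelopingAlgebra ℝ g) :=
  Submodule.pi Set.univ fun t => (It h lam t).restrictScalars ℝ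

def reducibleFamilies : Submodule ℝ (ℝ → UniversalEnvelopingAlgebra ℝ g) :=
  polyFamilies (Mspan Q) ⊔ idealFamilies h lam

variable {h lam Q}

lemma mul_iota_mem_reducibleFamilies (hlam : ∀ H₁ H₂ : h, lam ⁅H₁, H₂⁆ = 0)
    {f : ℝ → UniversalEnvelopingAlgebra ℝ g} (hf : f ∈ reducibleFamilies h lam Q) (H : h) :
    (fun t => f t * ι ℝ (H : g)) ∈ reducibleFamilies h lam Q := by
  obtain ⟨w, hw, z, hz, rfl⟩ := mem_sup.1 hf
  -- `w ι(H) ≡ -t λ(H) w` modulo the left ideal `I_t`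
  have : (fun t => (w + z) t * ι ℝ (H : g)) = (-lam H) • (fun t => t • w t) +
      fun t => w t * (ι ℝ (H : g) + (t * lam H) • 1) + z t * ι ℝ (H : g) := by
    ext t
    simp only [Pi.add_apply, Pi.smul_apply, add_mul, mul_add, mul_smul_comm, mul_one, smul_smul]
    module
  rw [this]
  refine add_mem (mem_sup_left (smul_mem _ _ (smul_id_mem_polyFamilies hw)))
    (mem_sup_right ((mem_pi).2 fun t _ => add_mem ?_ ?_))
  · exact Ideal.mul_mem_left _ _ (iota_add_smul_one_mem_It H)
  · exact mul_mem_It_of_isInvariantMod ((mem_pi).1 hz t trivial) (isInvariantMod_iota hlam H)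

lemma mul_wordProd_mem_reducibleFamilies (hlam : ∀ H₁ H₂ : h, lam ⁅H₁, H₂⁆ = 0) (ℓ : List h)
    {f : ℝ → UniversalEnvelopingAlgebra ℝ g} (hf : f ∈ reducibleFamilies h lam Q) :
    (fun t => f t * wordProd ℝ (fun H : h => (H : g)) ℓ) ∈ reducibleFamilies h lam Q := by
  induction ℓ generalizing f with
  | nil => simpa using hf
  | cons H ℓ ih =>
    simpa [mul_assoc] using ih (mul_iota_mem_reducibleFamilies hlam hf H)

lemma wordProd_mem_Mspan {ℓ : List (Fin p)} (hℓ : ℓ.Pairwise (· ≤ ·)) :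
    wordProd ℝ (fun i => (Q i : g)) ℓ ∈ Mspan Q := by
  rw [wordProd, List.prod_map_eq_prod_ofFn_pow_count hℓ]
  exact subset_span ⟨fun i => ℓ.count i, rfl⟩

lemma span_range_sumElim_eq_top (hq : IsCompl h.toSubmodule q) :
    span ℝ (Set.range (Sum.elim (fun i => (Q i : g)) fun H : h => (H : g))) = ⊤ := by
  have hQ : span ℝ (Set.range fun i => (Q i : g)) = q := by
    rw [show (Set.range fun i => (Q i : g)) = q.subtype '' Set.range Q from Set.range_comp _ _,
      span_image, Q.span_eq, Submodule.map_top, range_subtype]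
  have hh : span ℝ (Set.range fun H : h => (H : g)) = h.toSubmodule :=
    le_antisymm (span_le.2 (by rintro _ ⟨H, rfl⟩; exact H.2)) fun x hx => subset_span ⟨⟨x, hx⟩, rfl⟩
  rw [Set.Sum.elim_range, span_union, hQ, hh, sup_comm, hq.sup_eq_top]

lemma pow_smul_mem_reducibleFamilies (hlam : ∀ H₁ H₂ : h, lam ⁅H₁, H₂⁆ = 0)
    (hq : IsCompl h.toSubmodule q) (k : ℕ) (x : UniversalEnvelopingAlgebra ℝ g) :
    (fun t : ℝ => t ^ k • x) ∈ reducibleFamilies h lam Q := by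
  set β := Sum.elim (fun i => (Q i : g)) fun H : h => (H : g)
  -- sorting by `κ` puts the `q`-letters first, in increasing order, and the `h`-letters last
  set κ : Fin p ⊕ h → WithTop (Fin p) := Sum.elim (↑) fun _ => ⊤
  have hx : x ∈ span ℝ (wordProd ℝ β '' {ℓ | ℓ.Pairwise fun a b => κ a ≤ κ b}) := by
    rw [span_wordProd_sorted_eq_top β κ (span_range_sumElim_eq_top hq)]; trivial
  suffices wordProd ℝ β '' {ℓ | ℓ.Pairwise fun a b => κ a ≤ κ b} ⊆
      (reducibleFamilies h lam Q).comap (LinearMap.pi fun t : ℝ => t ^ k • LinearMap.id) from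
    span_le.2 this hx
  rintro _ ⟨ℓ, hℓ, rfl⟩
  obtain ⟨ℓq, ℓh, hℓq, rfl⟩ := List.exists_eq_map_inl_append_map_inr hℓ
  have hmon := mem_sup_left (T := idealFamilies h lam)
    (pow_smul_mem_polyFamilies k (wordProd_mem_Mspan (Q := Q) hℓq))
  rw [SetLike.mem_coe, mem_comap]
  convert mul_wordProd_mem_reducibleFamilies hlam ℓh hmon using 1
  ext t
  simp [β, Function.comp_def]

lemma polyFamilies_top_le_reducibleFamilies (hlam : ∀ H₁ H₂ : h, lam ⁅H₁, H₂⁆ = 0)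
    (hq : IsCompl h.toSubmodule q) : polyFamilies ⊤ ≤ reducibleFamilies h lam Q :=
  span_le.2 <| by
    rintro _ ⟨k, x, -, rfl⟩
    exact pow_smul_mem_reducibleFamilies hlam hq k x

end Reduction

theorem stmt0_general (g : Type*) [LieRing g] [LieAlgebra ℝ g]
    (h : LieSubalgebra ℝ g) (lam : h →ₗ[ℝ] ℝ)
    (hlam : ∀ H₁ H₂ : h, lam ⁅H₁, H₂⁆ = 0)
    (q : Submodule ℝ g) (hq : IsCompl h.toSubmodule q)
    (p : ℕ) (Q : Module.Basis (Fin p) ℝ q)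
    (n m : ℕ) (a b : ℕ → UniversalEnvelopingAlgebra ℝ g)
    (hu : ∀ (t : ℝ) (H : h),
      ι ℝ (H : g) * (∑ k ∈ Finset.range (n + 1), t ^ k • a k)
        - (∑ k ∈ Finset.range (n + 1), t ^ k • a k) * ι ℝ (H : g) ∈ It h lam t)
    (hv : ∀ (t : ℝ) (H : h),
      ι ℝ (H : g) * (∑ k ∈ Finset.range (m + 1), t ^ k • b k)
        - (∑ k ∈ Finset.range (m + 1), t ^ k • b k) * ι ℝ (H : g) ∈ It h lam t) :
    ∃ (N : ℕ) (c : ℕ → UniversalEnvelopingAlgebra ℝ g),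
      (∀ k, c k ∈ Mspan Q) ∧
      ∀ t : ℝ,
        ((∑ k ∈ Finset.range (N + 1), t ^ k • c k)
            - (∑ k ∈ Finset.range (n + 1), t ^ k • a k)
              * (∑ k ∈ Finset.range (m + 1), t ^ k • b k) ∈ It h lam t) ∧
        ∀ H : h,
          ι ℝ (H : g) * (∑ k ∈ Finset.range (N + 1), t ^ k • c k)
            - (∑ k ∈ Finset.range (N + 1), t ^ k • c k) * ι ℝ (H : g) ∈ It h lam t := by
  have hu' : (fun t : ℝ => ∑ k ∈ Finset.range (n + 1), t ^ k • a k) ∈ polyFamilies ⊤ :=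
    sum_pow_smul_mem_polyFamilies _ fun _ _ => mem_top
  have hv' : (fun t : ℝ => ∑ k ∈ Finset.range (m + 1), t ^ k • b k) ∈ polyFamilies ⊤ :=
    sum_pow_smul_mem_polyFamilies _ fun _ _ => mem_top
  obtain ⟨w, hw, z, hz, hwz⟩ := mem_sup.1 <| polyFamilies_top_le_reducibleFamilies (Q := Q) hlam hq
    (polyFamilies_mono le_top (mul_mem_polyFamilies hu' hv'))
  obtain ⟨N, c, hc, hwc⟩ := exists_eq_sum_range_of_mem_polyFamilies hw
  refine ⟨N, c, hc, fun t => ?_⟩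
  have hdiff : (∑ k ∈ Finset.range (N + 1), t ^ k • c k)
      - (∑ k ∈ Finset.range (n + 1), t ^ k • a k) * (∑ k ∈ Finset.range (m + 1), t ^ k • b k)
      ∈ It h lam t := by
    rw [← hwc t, show _ * _ = w t + z t from (congrFun hwz t).symm, sub_add_cancel_left]
    exact neg_mem ((mem_pi).1 hz t trivial)
  exact ⟨hdiff, (IsInvariantMod.mul (hu t) (hv t)).of_sub_mem hlam hdiff⟩

theorem stmt0 (g : Type*) [LieRing g] [LieAlgebra ℝ g] [FiniteDimensional ℝ g]
    (h : LieSubalgebra ℝ g) (lam : h →ₗ[ℝ] ℝ)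
    (hlam : ∀ H₁ H₂ : h, lam ⁅H₁, H₂⁆ = 0)
    (q : Submodule ℝ g) (hq : IsCompl h.toSubmodule q)
    (p : ℕ) (Q : Module.Basis (Fin p) ℝ q)
    (n m : ℕ) (a b : ℕ → UniversalEnvelopingAlgebra ℝ g)
    (hu : ∀ (t : ℝ) (H : h),
      ι ℝ (H : g) * (∑ k ∈ Finset.range (n + 1), t ^ k • a k)
        - (∑ k ∈ Finset.range (n + 1), t ^ k • a k) * ι ℝ (H : g) ∈ It h lam t)
    (hv : ∀ (t : ℝ) (H : h),
      ι ℝ (H : g) * (∑ k ∈ Finset.range (m + 1), t ^ k • b k)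
        - (∑ k ∈ Finset.range (m + 1), t ^ k • b k) * ι ℝ (H : g) ∈ It h lam t) :
    ∃ (N : ℕ) (c : ℕ → UniversalEnvelopingAlgebra ℝ g),
      (∀ k, c k ∈ Mspan Q) ∧
      ∀ t : ℝ,
        ((∑ k ∈ Finset.range (N + 1), t ^ k • c k)
            - (∑ k ∈ Finset.range (n + 1), t ^ k • a k)
              * (∑ k ∈ Finset.range (m + 1), t ^ k • b k) ∈ It h lam t) ∧
        ∀ H : h,
          ι ℝ (H : g) * (∑ k ∈ Finset.range (N + 1), t ^ k • c k)
            - (∑ k ∈ Finset.range (N + 1), t ^ k • c k) * ι ℝ (H : g) ∈ It h lam t :=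
  stmt0_general g h lam hlam q hq p Q n m a b hu hv
end
end

section
/- Specialization of invariant elements of the central extension yields polynomial invariant families (one direction of the paper's Corollary 6.6): let U ∈ U(g_T) be such that ι_T((H,λ(H)))·U − U·ι_T((H,λ(H))) ∈ I^T for every H ∈ h. Then (i) there exist finitely many a₀,…,a_n ∈ U(g) such that e_t(U) = Σ_{k=0}^n t^k a_k for every t ∈ K (the family t ↦ e_t(U) is polynomial in t), and (ii) for every t ∈ K and every H ∈ h, ι(H)·e_t(U) − e_t(U)·ι(H) ∈ I_t. -/
/-!
Statement 2 (one direction of the paper's Corollary 6.6): specialization of invariant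
elements of the central extension yields polynomial invariant families.
-/

noncomputable section

open UniversalEnvelopingAlgebra

attribute [local instance 100] LieRing.ofAssociativeRing

/-- The Lie ring structure on the direct product `g × ℝ` of `g` with the 1-dimensional
abelian Lie algebra `ℝ`. -/
instance prodLieRing (g : Type*) [LieRing g] : LieRing (g × ℝ) where
  bracket x y := (⁅x.1, y.1⁆, 0)
  add_lie x y z := by
    show (⁅x.1 + y.1, z.1⁆, (0 : ℝ)) = (⁅x.1, z.1⁆, (0 : ℝ)) + (⁅y.1, z.1⁆, (0 : ℝ))
    rw [add_lie, Prod.mk_add_mk, add_zero]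
  lie_add x y z := by
    show (⁅x.1, y.1 + z.1⁆, (0 : ℝ)) = (⁅x.1, y.1⁆, (0 : ℝ)) + (⁅x.1, z.1⁆, (0 : ℝ))
    rw [lie_add, Prod.mk_add_mk, add_zero]
  lie_self x := by
    show (⁅x.1, x.1⁆, (0 : ℝ)) = (0, 0)
    rw [lie_self]
  leibniz_lie x y z := by
    show (⁅x.1, ⁅y.1, z.1⁆⁆, (0 : ℝ))
        = (⁅⁅x.1, y.1⁆, z.1⁆, (0 : ℝ)) + (⁅y.1, ⁅x.1, z.1⁆⁆, (0 : ℝ))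
    rw [Prod.mk_add_mk, add_zero, leibniz_lie]

instance prodLieAlgebra (g : Type*) [LieRing g] [LieAlgebra ℝ g] :
    LieAlgebra ℝ (g × ℝ) where
  lie_smul c x y := by
    show (⁅x.1, (c • y).1⁆, (0 : ℝ)) = c • (⁅x.1, y.1⁆, (0 : ℝ))
    rw [Prod.smul_fst, lie_smul, Prod.smul_mk, smul_zero]

/-- The Lie algebra map `g_T → U(g)`, `(X, c) ↦ ι(X) + t·c·1`, where `U(g)` is regarded as
a Lie algebra via the commutator bracket. -/
def phiT {g : Type*} [LieRing g] [LieAlgebra ℝ g] (t : ℝ) :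
    (g × ℝ) →ₗ⁅ℝ⁆ UniversalEnvelopingAlgebra ℝ g where
  toFun x := ι ℝ x.1 + (t * x.2) • 1
  map_add' x y := by
    simp only [Prod.fst_add, Prod.snd_add, map_add, mul_add, add_smul]
    abel
  map_smul' c x := by
    simp only [Prod.smul_fst, Prod.smul_snd, map_smul, RingHom.id_apply, smul_eq_mul,
      smul_add, smul_smul]
    module
  map_lie' {x y} := by
    have hxy : ⁅x, y⁆ = (⁅x.1, y.1⁆, (0 : ℝ)) := rfl
    rw [hxy]
    show ι ℝ ⁅x.1, y.1⁆ + (t * 0) • 1 = _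
    rw [LieHom.map_lie, LieRing.of_associative_ring_bracket, mul_zero, zero_smul, add_zero,
      LieRing.of_associative_ring_bracket]
    simp only [mul_add, add_mul, smul_mul_assoc, mul_smul_comm, mul_one, one_mul, smul_add,
      smul_smul]
    module

/-- The evaluation algebra homomorphism `e_t : U(g_T) → U(g)`. -/
def eT {g : Type*} [LieRing g] [LieAlgebra ℝ g] (t : ℝ) :
    UniversalEnvelopingAlgebra ℝ (g × ℝ) →ₐ[ℝ] UniversalEnvelopingAlgebra ℝ g :=
  UniversalEnvelopingAlgebra.lift ℝ (phiT t)

/-- The left ideal `I^T = U(g_T)·h^T_λ` generated by the `ι_T((H, λ(H)))`, `H ∈ h`. -/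
def IT {g : Type*} [LieRing g] [LieAlgebra ℝ g] (h : LieSubalgebra ℝ g)
    (lam : h →ₗ[ℝ] ℝ) : Ideal (UniversalEnvelopingAlgebra ℝ (g × ℝ)) :=
  Ideal.span {x | ∃ H : h, x = ι ℝ (((H : g), lam H) : g × ℝ)}


/-!
Sending `(X, c) ∈ g_T` to `ι X + c·T` with `T` a central polynomial variable gives an algebra map
`U(g_T) → U(g)[T]`, and `e_t` is this map followed by evaluation at `T = t`; the coefficients of
the image of `U` are the `a_k`. For invariance, `e_t` sends the generators of `I^T` to those of
`I_t`, and shifting `ι H` by the scalar `t λ(H)` does not change its commutator with `e_t U`.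
-/

section

open Polynomial

lemma eval₂_algebraMap_eq_sum_range_smul {R A : Type*} [CommSemiring R] [Semiring A]
    [Algebra R A] (p : A[X]) (t : R) :
    p.eval₂ (RingHom.id A) (algebraMap R A t) =
      ∑ k ∈ Finset.range (p.natDegree + 1), t ^ k • p.coeff k := by
  rw [eval₂_eq_sum_range]
  refine Finset.sum_congr rfl fun k _ => ?_
  rw [RingHom.id_apply, ← map_pow, ← Algebra.commutes, Algebra.smul_def]

lemma commutator_add_smul_one {R A : Type*} [CommRing R] [Ring A] [Algebra R A]
    (x y : A) (c : R) : (x + c • 1) * y - y * (x + c • 1) = x * y - y * x := by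
  rw [add_mul, mul_add, smul_one_mul, mul_smul_one]
  abel

variable {g : Type*} [LieRing g] [LieAlgebra ℝ g]

variable (g) in
def toPolyLieHom : (g × ℝ) →ₗ⁅ℝ⁆ (UniversalEnvelopingAlgebra ℝ g)[X] where
  toFun x := C (ι ℝ x.1) + x.2 • X
  map_add' x y := by
    simp only [Prod.fst_add, Prod.snd_add, map_add, add_smul]
    abel
  map_smul' c x := by
    simp only [Prod.smul_fst, Prod.smul_snd, map_smul, RingHom.id_apply, smul_eq_mul,
      ← smul_C, smul_add, mul_smul]
  map_lie' {x y} := by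
    show C (ι ℝ ⁅x.1, y.1⁆) + (0 : ℝ) • X = _
    rw [LieHom.map_lie, LieRing.of_associative_ring_bracket, zero_smul, add_zero,
      LieRing.of_associative_ring_bracket, map_sub, map_mul, map_mul]
    simp only [mul_add, add_mul, smul_mul_assoc, mul_smul_comm, X_mul_C, smul_add, smul_smul]
    module

variable (g) in
def toPoly : UniversalEnvelopingAlgebra ℝ (g × ℝ) →ₐ[ℝ] (UniversalEnvelopingAlgebra ℝ g)[X] :=
  lift ℝ (toPolyLieHom g)

lemma eT_ι (t : ℝ) (x : g × ℝ) : eT t (ι ℝ x) = ι ℝ x.1 + (t * x.2) • 1 :=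
  lift_ι_apply ℝ (phiT t) x

lemma eT_eq_eval₂_toPoly (t : ℝ) (u : UniversalEnvelopingAlgebra ℝ (g × ℝ)) :
    eT t u = (toPoly g u).eval₂ (RingHom.id _) (algebraMap ℝ _ t) := by
  let evalAt : (UniversalEnvelopingAlgebra ℝ g)[X] →ₐ[ℝ] UniversalEnvelopingAlgebra ℝ g :=
    eval₂AlgHom (AlgHom.id ℝ _) (algebraMap ℝ _ t) fun a => (Algebra.commutes t a).symm
  suffices eT t = evalAt.comp (toPoly g) from DFunLike.congr_fun this u
  refine hom_ext ℝ (LieHom.ext fun x => ?_)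
  show eT t (ι ℝ x) = evalAt (toPoly g (ι ℝ x))
  rw [eT_ι, toPoly, lift_ι_apply]
  show _ = evalAt (C (ι ℝ x.1) + x.2 • X)
  rw [map_add, map_smul]
  simp only [evalAt, eval₂AlgHom_apply, eval₂_C, eval₂_X,
    AlgHom.coe_toRingHom, AlgHom.id_apply, Algebra.algebraMap_eq_smul_one, smul_smul, mul_comm]

lemma IT_le_comap_eT (h : LieSubalgebra ℝ g) (lam : h →ₗ[ℝ] ℝ) (t : ℝ) :
    IT h lam ≤ (It h lam t).comap (eT t) :=
  Ideal.span_le.mpr <| by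
    rintro _ ⟨H, rfl⟩
    exact Ideal.subset_span ⟨H, eT_ι t _⟩

end

theorem stmt2_general (g : Type*) [LieRing g] [LieAlgebra ℝ g]
    (h : LieSubalgebra ℝ g) (lam : h →ₗ[ℝ] ℝ)
    (U : UniversalEnvelopingAlgebra ℝ (g × ℝ))
    (hU : ∀ H : h,
      ι ℝ (((H : g), lam H) : g × ℝ) * U - U * ι ℝ (((H : g), lam H) : g × ℝ)
        ∈ IT h lam) :
    (∃ (n : ℕ) (a : ℕ → UniversalEnvelopingAlgebra ℝ g),
      ∀ t : ℝ, eT t U = ∑ k ∈ Finset.range (n + 1), t ^ k • a k) ∧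
    ∀ (t : ℝ) (H : h),
      ι ℝ (H : g) * eT t U - eT t U * ι ℝ (H : g) ∈ It h lam t := by
  refine ⟨⟨(toPoly g U).natDegree, (toPoly g U).coeff, fun t => ?_⟩, fun t H => ?_⟩
  · rw [eT_eq_eval₂_toPoly, eval₂_algebraMap_eq_sum_range_smul]
  · have hmem := IT_le_comap_eT h lam t (hU H)
    rwa [Ideal.mem_comap, map_sub, map_mul, map_mul, eT_ι, commutator_add_smul_one] at hmem

theorem stmt2 (g : Type*) [LieRing g] [LieAlgebra ℝ g] [FiniteDimensional ℝ g]
    (h : LieSubalgebra ℝ g) (lam : h →ₗ[ℝ] ℝ)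
    (hlam : ∀ H₁ H₂ : h, lam ⁅H₁, H₂⁆ = 0)
    (U : UniversalEnvelopingAlgebra ℝ (g × ℝ))
    (hU : ∀ H : h,
      ι ℝ (((H : g), lam H) : g × ℝ) * U - U * ι ℝ (((H : g), lam H) : g × ℝ)
        ∈ IT h lam) :
    (∃ (n : ℕ) (a : ℕ → UniversalEnvelopingAlgebra ℝ g),
      ∀ t : ℝ, eT t U = ∑ k ∈ Finset.range (n + 1), t ^ k • a k) ∧
    ∀ (t : ℝ) (H : h),
      ι ℝ (H : g) * eT t U - eT t U * ι ℝ (H : g) ∈ It h lam t :=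
  stmt2_general g h lam U hU
end
end

section
/- Abstract form of the paper's Lemma 3.5: suppose F' = Σ_{k=0}^n ε^k·F'_k ∈ V[ε] (with F'_k ∈ V) satisfies d_ε(F') = 0. Then (a) d(Σ_{k=0}^n F'_k) = 0, and (b) if Σ_{k=0}^n F'_k = 0 then F' ∈ (ε−1)·(ker d_ε). Consequently the induced K-linear map J̄ : ker d_ε / (ε−1)·ker d_ε → ker d, sending the class of Σ_k ε^k F'_k to Σ_k F'_k, is well defined and injective. -/
/-!
Evaluation at `ε = 1` intertwines `d_ε` with `d`, which gives (a). For (b), an element of `V[ε]`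
vanishing at `ε = 1` is divisible by `ε - 1`, and `ε - 1` is a non-zero-divisor on `W[ε]`, so the
quotient is again a cycle of `d_ε`.
-/

open Polynomial

namespace PolynomialModule

section

variable {R M : Type*} [CommRing R] [AddCommGroup M] [Module R M]

theorem coeff_X_sub_C_smul_succ (a : R) (H : PolynomialModule R M) (n : ℕ) :
    ((X - C a) • H).coeff (n + 1) = H.coeff n - a • H.coeff (n + 1) := by
  rw [sub_smul, ← monomial_one_one_eq_X, ← monomial_zero_left (a := a)]
  change (monomial 1 1 • H).coeff (n + 1) - (monomial 0 a • H).coeff (n + 1) = _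
  rw [monomial_smul_apply, monomial_smul_apply]
  simp

theorem eq_zero_of_X_sub_C_smul_eq_zero {a : R} {H : PolynomialModule R M}
    (h : (X - C a) • H = 0) : H = 0 := by
  have shift : ∀ n k, H.coeff n = a ^ k • H.coeff (n + k) := by
    intro n k
    induction k with
    | zero => simp
    | succ k ih =>
      have step := coeff_X_sub_C_smul_succ a H (n + k)
      rw [h, coeff_zero, Finsupp.coe_zero, Pi.zero_apply, eq_comm, sub_eq_zero] at step
      rw [ih, step, smul_smul, pow_succ, add_assoc]
  ext n
  obtain ⟨N, hN⟩ := H.coeff.support.exists_nat_subset_range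
  have hvanish : H.coeff (n + N) = 0 :=
    Finsupp.notMem_support_iff.mp fun hmem => by simpa using Finset.mem_range.mp (hN hmem)
  rw [shift n N, hvanish, smul_zero]
  rfl

theorem exists_eq_X_sub_C_smul_of_eval_eq_zero {a : R} {F : PolynomialModule R M}
    (h : eval a F = 0) : ∃ G : PolynomialModule R M, F = (X - C a) • G := by
  suffices key : ∀ F : PolynomialModule R M,
      ∃ G, F - single R 0 (eval a F) = (X - C a) • G by
    simpa [h] using key F
  intro F
  induction F using induction_linear with
  | zero => exact ⟨0, by simp⟩
  | add F₁ F₂ ih₁ ih₂ =>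
    obtain ⟨G₁, hG₁⟩ := ih₁
    obtain ⟨G₂, hG₂⟩ := ih₂
    refine ⟨G₁ + G₂, ?_⟩
    rw [map_add, single_add, smul_add, ← hG₁, ← hG₂]
    abel
  | single n m =>
    obtain ⟨q, hq⟩ : X - C a ∣ X ^ n - C (a ^ n) := by
      simpa using sub_dvd_pow_sub_pow X (C a) n
    refine ⟨q • single R 0 m, ?_⟩
    rw [smul_smul, ← hq, eval_single, sub_smul, X_pow_eq_monomial, ← monomial_zero_left,
      monomial_smul_single, monomial_smul_single, one_smul, add_zero, zero_add]

end

theorem eval_one_map_eq_finsum {K V W : Type*} [CommRing K]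
    [AddCommGroup V] [Module K V] [AddCommGroup W] [Module K W]
    (d : ℕ → V →ₗ[K] W) (hfin : ∀ v : V, (Function.support fun i => d i v).Finite)
    (dE : PolynomialModule K V →+ PolynomialModule K W)
    (hdE : ∀ (k : ℕ) (v : V), dE (single K k v) = ∑ᶠ i, single K (i + k) (d i v))
    (F : PolynomialModule K V) :
    eval 1 (dE F) = ∑ᶠ i, d i (eval 1 F) := by
  induction F using induction_linear with
  | zero => simp
  | add F₁ F₂ ih₁ ih₂ =>
    simp only [map_add, ih₁, ih₂]
    exact (finsum_add_distrib (hfin _) (hfin _)).symm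
  | single k v =>
    have hsupp : (Function.support fun i => single K (i + k) (d i v)).Finite :=
      (hfin v).subset <| Function.support_subset_iff'.mpr fun i hi => by
        rw [Function.notMem_support.mp hi, single_zero]
    rw [hdE]
    refine ((eval (1 : K)).toAddMonoidHom.map_finsum hsupp).trans ?_
    simp [eval_single]

end PolynomialModule

theorem stmt5_general (K V W : Type*) [Field K]
    [AddCommGroup V] [Module K V] [AddCommGroup W] [Module K W]
    (d : ℕ → V →ₗ[K] W)
    -- the family is pointwise finite, so that `d = Σ_i d_i` makes sense
    (hfin : ∀ v : V, (Function.support fun i => d i v).Finite)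
    -- the `K[ε]`-linear differential `d_ε = Σ_i ε^i d_i` on `V[ε]`
    (dE : PolynomialModule K V →ₗ[Polynomial K] PolynomialModule K W)
    (hdE : ∀ (k : ℕ) (v : V),
      dE (PolynomialModule.single K k v)
        = ∑ᶠ i, PolynomialModule.single K (i + k) (d i v))
    (n : ℕ) (F' : ℕ → V)
    (hF' : dE (∑ k ∈ Finset.range (n + 1),
      PolynomialModule.single K k (F' k)) = 0) :
    -- (a) `d(Σ_k F'_k) = 0`
    (∑ᶠ i, d i (∑ k ∈ Finset.range (n + 1), F' k)) = 0 ∧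
    -- (b) if `Σ_k F'_k = 0` then `F' ∈ (ε-1)·ker d_ε`
    ((∑ k ∈ Finset.range (n + 1), F' k) = 0 →
      ∃ G : PolynomialModule K V, dE G = 0 ∧
        (∑ k ∈ Finset.range (n + 1), PolynomialModule.single K k (F' k))
          = ((X : Polynomial K) - 1) • G) := by
  set F := ∑ k ∈ Finset.range (n + 1), PolynomialModule.single K k (F' k)
  have heval : PolynomialModule.eval 1 F = ∑ k ∈ Finset.range (n + 1), F' k := by
    simp [F, PolynomialModule.eval_single]
  constructor
  · rw [← heval, ← PolynomialModule.eval_one_map_eq_finsum d hfin dE.toAddMonoidHom hdE]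
    simp [hF']
  · intro hsum
    obtain ⟨G, hG⟩ := PolynomialModule.exists_eq_X_sub_C_smul_of_eval_eq_zero (heval.trans hsum)
    rw [C_1] at hG
    refine ⟨G, PolynomialModule.eq_zero_of_X_sub_C_smul_eq_zero (a := 1) ?_, hG⟩
    rw [C_1, ← map_smul, ← hG, hF']

theorem stmt5 (K V W : Type*) [Field K]
    [AddCommGroup V] [Module K V] [AddCommGroup W] [Module K W]
    (d : ℕ → V →ₗ[K] W) (hd0 : d 0 = 0)
    -- the family is pointwise finite, so that `d = Σ_i d_i` makes sense
    (hfin : ∀ v : V, (Function.support fun i => d i v).Finite)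
    -- the `K[ε]`-linear differential `d_ε = Σ_i ε^i d_i` on `V[ε]`
    (dE : PolynomialModule K V →ₗ[Polynomial K] PolynomialModule K W)
    (hdE : ∀ (k : ℕ) (v : V),
      dE (PolynomialModule.single K k v)
        = ∑ᶠ i, PolynomialModule.single K (i + k) (d i v))
    (n : ℕ) (F' : ℕ → V)
    (hF' : dE (∑ k ∈ Finset.range (n + 1),
      PolynomialModule.single K k (F' k)) = 0) :
    -- (a) `d(Σ_k F'_k) = 0`
    (∑ᶠ i, d i (∑ k ∈ Finset.range (n + 1), F' k)) = 0 ∧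
    -- (b) if `Σ_k F'_k = 0` then `F' ∈ (ε-1)·ker d_ε`
    ((∑ k ∈ Finset.range (n + 1), F' k) = 0 →
      ∃ G : PolynomialModule K V, dE G = 0 ∧
        (∑ k ∈ Finset.range (n + 1), PolynomialModule.single K k (F' k))
          = ((X : Polynomial K) - 1) • G) :=
  stmt5_general K V W d hfin dE hdE n F' hF'
end

section
/- Abstract form of part 1 of the paper's Theorem 6.2 (the proof uses only the degree decomposition of the operators): let F₀,…,F_m ∈ V with homogeneous components F_p^(i) ∈ V_i, and suppose that D_t(Σ_{p=0}^m t^p F_p) = 0 for every t ∈ K \ {0}. Then for any integer N ≥ max{i+p : F_p^(i) ≠ 0}, the element F_ε := Σ_{i,p} ε^{N−i−p}·F_p^(i) of V[ε] satisfies D_ε(F_ε) = 0. -/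
/-!
Expand `D_t(Σ_p t^p F_p)` and `D_ε(F_ε)` into the summands `d'_k F_p^(i)` and `d''_k F_p^(i)`.
Such a summand has `t`-degree `p + 1` (resp. `p`), lies in `W_(i-k)` (resp. `W_(i+1-k)`), and
has `ε`-degree `k + N - i - p`; in both cases the three degrees add up to `N + 1`. Since the field
is infinite, `D_t(Σ_p t^p F_p) = 0` for all `t ≠ 0` forces each `t`-coefficient to vanish, and
then, `W` being graded, each `W_j`-component of it. By the degree relation these components are
exactly the `W_j`-components of the `ε`-coefficients of `D_ε(F_ε)`.
-/

open Polynomial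

theorem Finset.sum_filter_congr_of_ne_zero {ι M : Type*} [AddCommMonoid M] {s : Finset ι}
    {f : ι → M} {p q : ι → Prop} [DecidablePred p] [DecidablePred q]
    (h : ∀ i ∈ s, f i ≠ 0 → (p i ↔ q i)) : ∑ i ∈ s with p i, f i = ∑ i ∈ s with q i, f i := by
  rw [Finset.sum_filter, Finset.sum_filter]
  refine Finset.sum_congr rfl fun i hi => ?_
  by_cases hfi : f i = 0
  · simp [hfi]
  · simp only [h i hi hfi]

theorem Finset.sum_filter_eq_zero_of_forall_sum_pow_smul_eq_zero {K W ι : Type*} [Field K]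
    [Infinite K] [AddCommGroup W] [Module K W] {s : Finset ι} {τ : ι → ℕ} {x : ι → W}
    (h : ∀ t : K, t ≠ 0 → ∑ i ∈ s, t ^ τ i • x i = 0) (a : ℕ) :
    ∑ i ∈ s with τ i = a, x i = 0 := by
  refine (Module.forall_dual_apply_eq_zero_iff K _).mp fun φ => ?_
  set q : K[X] := ∑ i ∈ s, monomial (τ i) (φ (x i))
  have hq : q = 0 := by
    refine q.eq_zero_of_infinite_isRoot ((Set.finite_singleton 0).infinite_compl.mono ?_)
    intro t ht
    simpa [q, eval_finsetSum, mul_comm] using congrArg φ (h t ht)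
  simpa [q, finsetSum_coeff, coeff_monomial, Finset.sum_filter, eq_comm, apply_ite φ] using
    congrArg (coeff · a) hq

theorem DirectSum.IsInternal.sum_filter_eq_zero {R W ι κ : Type*} [Ring R] [AddCommGroup W]
    [Module R W] [DecidableEq κ] {Wg : κ → Submodule R W} (hWg : DirectSum.IsInternal Wg)
    {s : Finset ι} {x : ι → W} {ω : ι → κ} (hx : ∀ i ∈ s, x i ∈ Wg (ω i))
    (h : ∑ i ∈ s, x i = 0) (j : κ) : ∑ i ∈ s with ω i = j, x i = 0 := by
  let := hWg.chooseDecomposition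
  have := congrArg (fun w => (DirectSum.decompose Wg w j : W)) h
  rw [DirectSum.decompose_sum, DFinsupp.finsetSum_apply, AddSubmonoidClass.coe_finsetSum,
    DirectSum.decompose_zero, DirectSum.zero_apply, ZeroMemClass.coe_zero] at this
  rw [← this, Finset.sum_filter]
  refine Finset.sum_congr rfl fun i hi => ?_
  split_ifs with hij
  · exact (DirectSum.decompose_of_mem_same Wg (hij ▸ hx i hi)).symm
  · exact (DirectSum.decompose_of_mem_ne Wg (hx i hi) hij).symm

theorem DirectSum.IsInternal.sum_filter_eq_zero_of_add_add_eq {R W ι : Type*} [Ring R]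
    [AddCommGroup W] [Module R W] {Wg : ℕ → Submodule R W} (hWg : DirectSum.IsInternal Wg)
    {s : Finset ι} {x : ι → W} {τ ω η : ι → ℕ} {M : ℕ} (hx : ∀ i ∈ s, x i ∈ Wg (ω i))
    (hdeg : ∀ i ∈ s, x i ≠ 0 → τ i + ω i + η i = M) (h : ∀ a, ∑ i ∈ s with τ i = a, x i = 0)
    (e : ℕ) : ∑ i ∈ s with η i = e, x i = 0 := by
  rw [← Finset.sum_fiberwise_of_maps_to
    fun i hi => Finset.mem_image_of_mem ω (Finset.mem_filter.1 hi).1]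
  refine Finset.sum_eq_zero fun j _ => ?_
  rw [Finset.filter_filter]
  by_cases hej : e + j ≤ M
  · have hgr : ∑ i ∈ s with τ i = M - e - j ∧ ω i = j, x i = 0 := by
      rw [← Finset.filter_filter]
      exact hWg.sum_filter_eq_zero (fun i hi => hx i (Finset.mem_filter.1 hi).1) (h _) j
    rw [← hgr]
    refine Finset.sum_filter_congr_of_ne_zero fun i hi hxi => ?_
    have := hdeg i hi hxi
    omega
  · refine Finset.sum_eq_zero fun i hi => ?_
    obtain ⟨hi, hηi, hωi⟩ := Finset.mem_filter.1 hi
    by_contra hxi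
    have := hdeg i hi hxi
    omega

theorem PolynomialModule.sum_single_eq_zero {R M ι : Type*} [CommRing R] [AddCommGroup M]
    [Module R M] {s : Finset ι} {η : ι → ℕ} {x : ι → M}
    (h : ∀ e, ∑ i ∈ s with η i = e, x i = 0) : ∑ i ∈ s, single R (η i) (x i) = 0 := by
  rw [← Finset.sum_fiberwise_of_maps_to fun i hi => Finset.mem_image_of_mem η hi]
  refine Finset.sum_eq_zero fun e _ => ?_
  calc ∑ i ∈ s with η i = e, single R (η i) (x i)
      = ∑ i ∈ s with η i = e, lsingle R e (x i) :=
        Finset.sum_congr rfl fun i hi => by rw [(Finset.mem_filter.1 hi).2]; rfl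
    _ = 0 := by rw [← map_sum, h e, map_zero]

section Homogeneous

variable {R V W : Type*} [Ring R] [AddCommGroup V] [Module R V] [AddCommGroup W] [Module R W]
  {Vg : ℕ → Submodule R V} {Wg : ℕ → Submodule R W} {d : ℕ → V →ₗ[R] W} {c k i : ℕ} {x : V}

theorem le_add_of_homogeneous_apply_ne_zero
    (hd : ∀ k, 1 ≤ k → ∀ i, ∀ x ∈ Vg i,
      (k ≤ i + c → d k x ∈ Wg (i + c - k)) ∧ (i + c < k → d k x = 0))
    (hx : x ∈ Vg i) (hdx : d k x ≠ 0) : k ≤ i + c := by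
  by_contra hlt
  exact hdx ((hd k (by omega) i x hx).2 (by omega))

theorem homogeneous_apply_mem (h0 : d 0 = 0)
    (hd : ∀ k, 1 ≤ k → ∀ i, ∀ x ∈ Vg i,
      (k ≤ i + c → d k x ∈ Wg (i + c - k)) ∧ (i + c < k → d k x = 0))
    (hx : x ∈ Vg i) : d k x ∈ Wg (i + c - k) := by
  rcases Nat.eq_zero_or_pos k with rfl | hk
  · simp [h0]
  rcases le_or_gt k (i + c) with hki | hki
  · exact (hd k hk i x hx).1 hki
  · simp [(hd k hk i x hx).2 hki]

end Homogeneous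

namespace Homogenization

/-- `inl ((p, i), k)` stands for `d'_k F_p^(i)` and `inr ((p, i), k)` for `d''_k F_p^(i)`. -/
abbrev Index : Type := (ℕ × ℕ) × ℕ ⊕ (ℕ × ℕ) × ℕ

def indices (m N : ℕ) : Finset ((ℕ × ℕ) × ℕ) :=
  (Finset.range (m + 1) ×ˢ Finset.range (N + 1)) ×ˢ Finset.range (N + 2)

def term {R V W : Type*} [CommRing R] [AddCommGroup V] [Module R V] [AddCommGroup W]
    [Module R W] (d' d'' : ℕ → V →ₗ[R] W) (Fc : ℕ → ℕ → V) : Index → W :=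
  Sum.elim (fun q => d' q.2 (Fc q.1.1 q.1.2)) (fun q => d'' q.2 (Fc q.1.1 q.1.2))

def tDegree : Index → ℕ := Sum.elim (fun q => q.1.1 + 1) (fun q => q.1.1)

def gradeDegree : Index → ℕ := Sum.elim (fun q => q.1.2 - q.2) (fun q => q.1.2 + 1 - q.2)

def εDegree (N : ℕ) : Index → ℕ :=
  Sum.elim (fun q => q.2 + (N - q.1.2 - q.1.1)) (fun q => q.2 + (N - q.1.2 - q.1.1))

variable {R V W : Type*} [CommRing R] [AddCommGroup V] [Module R V] [AddCommGroup W]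
  [Module R W] {d' d'' : ℕ → V →ₗ[R] W} {Fc : ℕ → ℕ → V} {m N : ℕ}

theorem apply_sum_single_eq (DE : PolynomialModule R V →ₗ[R[X]] PolynomialModule R W)
    (hDE : ∀ (k : ℕ) (v : V),
      DE (PolynomialModule.single R k v)
        = ∑ᶠ j, PolynomialModule.single R (j + k) (d' j v + d'' j v))
    (hvanish : ∀ p i k, i ≤ N → N + 2 ≤ k → d' k (Fc p i) = 0 ∧ d'' k (Fc p i) = 0) :
    DE (∑ p ∈ Finset.range (m + 1), ∑ i ∈ Finset.range (N + 1),
        PolynomialModule.single R (N - i - p) (Fc p i))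
      = ∑ ι ∈ (indices m N).disjSum (indices m N),
          PolynomialModule.single R (εDegree N ι) (term d' d'' Fc ι) := by
  simp only [Finset.sum_disjSum, term, εDegree, Sum.elim_inl, Sum.elim_inr, indices,
    Finset.sum_product, ← Finset.sum_add_distrib, ← PolynomialModule.single_add, map_sum, hDE]
  refine Finset.sum_congr rfl fun p _ => Finset.sum_congr rfl fun i hi => ?_
  refine finsum_eq_sum_of_support_subset _ fun k hk => ?_
  by_contra hkN
  obtain ⟨h'k, h''k⟩ :=
    hvanish p i k (by simpa [Nat.lt_succ_iff] using hi) (by simpa using hkN)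
  simp [h'k, h''k] at hk

theorem finsum_smul_apply_add_apply_eq (t : R) (hFN : ∀ p i, Fc p i ≠ 0 → i ≤ N)
    (hvanish : ∀ p i k, i ≤ N → N + 2 ≤ k → d' k (Fc p i) = 0 ∧ d'' k (Fc p i) = 0) :
    ∑ᶠ k, (t • d' k (∑ p ∈ Finset.range (m + 1), t ^ p • ∑ᶠ i, Fc p i)
        + d'' k (∑ p ∈ Finset.range (m + 1), t ^ p • ∑ᶠ i, Fc p i))
      = ∑ ι ∈ (indices m N).disjSum (indices m N), t ^ tDegree ι • term d' d'' Fc ι := by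
  have hF : ∀ p, ∑ᶠ i, Fc p i = ∑ i ∈ Finset.range (N + 1), Fc p i := fun p =>
    finsum_eq_sum_of_support_subset _ fun i hi => by simpa [Nat.lt_succ_iff] using hFN p i hi
  simp only [hF, map_sum, map_smul, Finset.smul_sum, smul_smul, ← pow_succ']
  rw [finsum_eq_sum_of_support_subset _ (s := Finset.range (N + 2)) ?_]
  · simp only [Finset.sum_disjSum, term, tDegree, Sum.elim_inl, Sum.elim_inr, indices,
      Finset.sum_product, Finset.sum_add_distrib, Finset.sum_comm (s := Finset.range (N + 2))]
  · intro k hk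
    by_contra hkN
    have hk' : ∀ p, ∀ i ∈ Finset.range (N + 1), d' k (Fc p i) = 0 ∧ d'' k (Fc p i) = 0 :=
      fun p i hi => hvanish p i k (by simpa [Nat.lt_succ_iff] using hi) (by simpa using hkN)
    simp +contextual [hk'] at hk

theorem tDegree_add_gradeDegree_add_εDegree (hN : ∀ p i, Fc p i ≠ 0 → i + p ≤ N)
    (hd' : ∀ p i k, d' k (Fc p i) ≠ 0 → k ≤ i) (hd'' : ∀ p i k, d'' k (Fc p i) ≠ 0 → k ≤ i + 1)
    {ι : Index} (hι : term d' d'' Fc ι ≠ 0) : tDegree ι + gradeDegree ι + εDegree N ι = N + 1 := by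
  rcases ι with ⟨⟨p, i⟩, k⟩ | ⟨⟨p, i⟩, k⟩
  · have hip := hN p i fun h => hι (by simp [term, h])
    have := hd' p i k hι
    simp only [tDegree, gradeDegree, εDegree, Sum.elim_inl]
    omega
  · have hip := hN p i fun h => hι (by simp [term, h])
    have := hd'' p i k hι
    simp only [tDegree, gradeDegree, εDegree, Sum.elim_inr]
    omega

end Homogenization

theorem stmt6_general (V W : Type*)
    [AddCommGroup V] [Module ℝ V] [AddCommGroup W] [Module ℝ W]
    (Vg : ℕ → Submodule ℝ V) (Wg : ℕ → Submodule ℝ W)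
    (hWg : DirectSum.IsInternal Wg)
    (d' d'' : ℕ → V →ₗ[ℝ] W) (hd'0 : d' 0 = 0) (hd''0 : d'' 0 = 0)
    -- `d'_k` is homogeneous of degree `-k`
    (hd' : ∀ k, 1 ≤ k → ∀ i, ∀ x ∈ Vg i,
      (k ≤ i → d' k x ∈ Wg (i - k)) ∧ (i < k → d' k x = 0))
    -- `d''_k` is homogeneous of degree `1 - k`
    (hd'' : ∀ k, 1 ≤ k → ∀ i, ∀ x ∈ Vg i,
      (k ≤ i + 1 → d'' k x ∈ Wg (i + 1 - k)) ∧ (i + 1 < k → d'' k x = 0))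
    -- the `ℝ[ε]`-linear operator `D_ε = Σ_k ε^k·(d'_k + d''_k)`
    (DE : PolynomialModule ℝ V →ₗ[Polynomial ℝ] PolynomialModule ℝ W)
    (hDE : ∀ (k : ℕ) (v : V),
      DE (PolynomialModule.single ℝ k v)
        = ∑ᶠ j, PolynomialModule.single ℝ (j + k) (d' j v + d'' j v))
    -- the elements `F_p = Σ_i F_p^(i)` with homogeneous components `F_p^(i) ∈ V_i`
    (m : ℕ) (Fc : ℕ → ℕ → V)
    (hFc : ∀ p i, Fc p i ∈ Vg i)
    -- hypothesis: `D_t(Σ_p t^p F_p) = 0` for every `t ≠ 0`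
    (ht : ∀ t : ℝ, t ≠ 0 →
      (∑ᶠ k, (t • d' k (∑ p ∈ Finset.range (m + 1), t ^ p • ∑ᶠ i, Fc p i)
          + d'' k (∑ p ∈ Finset.range (m + 1), t ^ p • ∑ᶠ i, Fc p i))) = 0) :
    ∀ N : ℕ, (∀ p i, Fc p i ≠ 0 → i + p ≤ N) →
      DE (∑ p ∈ Finset.range (m + 1), ∑ i ∈ Finset.range (N + 1),
        PolynomialModule.single ℝ (N - i - p) (Fc p i)) = 0 := by
  intro N hN
  have hd'le p i k :=
    le_add_of_homogeneous_apply_ne_zero (c := 0) (d := d') (k := k) hd' (hFc p i)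
  have hd''le p i k :=
    le_add_of_homogeneous_apply_ne_zero (c := 1) (d := d'') (k := k) hd'' (hFc p i)
  have hFN p i (h : Fc p i ≠ 0) : i ≤ N := by have := hN p i h; omega
  have hvanish p i k (hi : i ≤ N) (hk : N + 2 ≤ k) : d' k (Fc p i) = 0 ∧ d'' k (Fc p i) = 0 :=
    ⟨by_contra fun h => by have := hd'le p i k h; omega,
      by_contra fun h => by have := hd''le p i k h; omega⟩
  rw [Homogenization.apply_sum_single_eq DE hDE hvanish]
  refine PolynomialModule.sum_single_eq_zero (hWg.sum_filter_eq_zero_of_add_add_eq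
    (ω := Homogenization.gradeDegree) (M := N + 1) ?_ ?_
    (Finset.sum_filter_eq_zero_of_forall_sum_pow_smul_eq_zero fun t ht0 =>
      (Homogenization.finsum_smul_apply_add_apply_eq t hFN hvanish).symm.trans (ht t ht0)))
  · rintro (⟨⟨p, i⟩, k⟩ | ⟨⟨p, i⟩, k⟩) -
    · exact homogeneous_apply_mem (c := 0) hd'0 hd' (hFc p i)
    · exact homogeneous_apply_mem (c := 1) hd''0 hd'' (hFc p i)
  · exact fun ι _ => Homogenization.tDegree_add_gradeDegree_add_εDegree hN hd'le hd''le

theorem stmt6 (V W : Type*)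
    [AddCommGroup V] [Module ℝ V] [AddCommGroup W] [Module ℝ W]
    (Vg : ℕ → Submodule ℝ V) (Wg : ℕ → Submodule ℝ W)
    (hVg : DirectSum.IsInternal Vg) (hWg : DirectSum.IsInternal Wg)
    (d' d'' : ℕ → V →ₗ[ℝ] W) (hd'0 : d' 0 = 0) (hd''0 : d'' 0 = 0)
    -- `d'_k` is homogeneous of degree `-k`
    (hd' : ∀ k, 1 ≤ k → ∀ i, ∀ x ∈ Vg i,
      (k ≤ i → d' k x ∈ Wg (i - k)) ∧ (i < k → d' k x = 0))
    -- `d''_k` is homogeneous of degree `1 - k`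
    (hd'' : ∀ k, 1 ≤ k → ∀ i, ∀ x ∈ Vg i,
      (k ≤ i + 1 → d'' k x ∈ Wg (i + 1 - k)) ∧ (i + 1 < k → d'' k x = 0))
    -- the `ℝ[ε]`-linear operator `D_ε = Σ_k ε^k·(d'_k + d''_k)`
    (DE : PolynomialModule ℝ V →ₗ[Polynomial ℝ] PolynomialModule ℝ W)
    (hDE : ∀ (k : ℕ) (v : V),
      DE (PolynomialModule.single ℝ k v)
        = ∑ᶠ j, PolynomialModule.single ℝ (j + k) (d' j v + d'' j v))
    -- the elements `F_p = Σ_i F_p^(i)` with homogeneous components `F_p^(i) ∈ V_i`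
    (m : ℕ) (Fc : ℕ → ℕ → V)
    (hFc : ∀ p i, Fc p i ∈ Vg i)
    (hFfin : ∀ p, (Function.support (Fc p)).Finite)
    -- hypothesis: `D_t(Σ_p t^p F_p) = 0` for every `t ≠ 0`
    (ht : ∀ t : ℝ, t ≠ 0 →
      (∑ᶠ k, (t • d' k (∑ p ∈ Finset.range (m + 1), t ^ p • ∑ᶠ i, Fc p i)
          + d'' k (∑ p ∈ Finset.range (m + 1), t ^ p • ∑ᶠ i, Fc p i))) = 0) :
    ∀ N : ℕ, (∀ p i, Fc p i ≠ 0 → i + p ≤ N) →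
      DE (∑ p ∈ Finset.range (m + 1), ∑ i ∈ Finset.range (N + 1),
        PolynomialModule.single ℝ (N - i - p) (Fc p i)) = 0 :=
  stmt6_general V W Vg Wg hWg d' d'' hd'0 hd''0 hd' hd'' DE hDE m Fc hFc ht
end

section
/- Abstract form of part 2 of the paper's Theorem 6.2: let F₀,…,F_n ∈ V with homogeneous components F_k^(i) ∈ V_i, and suppose that D_ε(Σ_{k=0}^n ε^k F_k) = 0 in W[ε]. Then for every t ∈ K \ {0} and any integer N ≥ max{i+k : F_k^(i) ≠ 0}, one has D_t(Σ_{i,k} t^{N−i−k}·F_k^(i)) = 0. -/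
/-!
Expanding `D_ε(Σ_k ε^k F_k)` produces the terms `d'_j F_k^(i)` and `d''_j F_k^(i)`, of bidegree
(degree in `W`, degree in `ε`) equal to `(i - j, j + k)` and `(i + 1 - j, j + k)`. The hypothesis
says that the terms of each `ε`-degree `m` sum to zero; as `W` is graded, so do the terms of each
bidegree `(p, m)`. The same terms make up `D_t(Σ t^(N-i-k) F_k^(i))`, each weighted by
`t^(N+1-p-m)`, so this sum vanishes too.
-/

open Polynomial

section GradedSums

variable {ι κ α R M : Type*} [Ring R] [AddCommGroup M] [Module R M] {Mg : ι → Submodule R M}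
  {s : Finset α} {w : α → M} {deg : α → ι}

theorem iSupIndep.sum_filter_eq_zero_of_sum_eq_zero [DecidableEq ι] (hM : iSupIndep Mg)
    (hw : ∀ a ∈ s, w a ∈ Mg (deg a)) (h : ∑ a ∈ s, w a = 0) (p : ι) :
    ∑ a ∈ s with deg a = p, w a = 0 := by
  by_cases hp : p ∈ s.image deg
  · refine (iSupIndep_iff_finsetSum_eq_zero_imp_eq_zero Mg).1 hM (s.image deg)
      (fun q => ∑ a ∈ s with deg a = q, w a) (fun q _ => ?_) ?_ p hp
    · refine Submodule.sum_mem _ fun a ha => ?_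
      obtain ⟨has, rfl⟩ := Finset.mem_filter.1 ha
      exact hw a has
    · rwa [Finset.sum_fiberwise_of_maps_to fun a ha => Finset.mem_image_of_mem deg ha]
  · refine Finset.sum_eq_zero fun a ha => absurd ?_ hp
    obtain ⟨has, rfl⟩ := Finset.mem_filter.1 ha
    exact Finset.mem_image_of_mem deg has

theorem iSupIndep.sum_smul_eq_zero_of_sum_filter_eq_zero [DecidableEq ι] [DecidableEq κ]
    (hM : iSupIndep Mg) {lvl : α → κ} (hw : ∀ a ∈ s, w a ∈ Mg (deg a))
    (h : ∀ m, ∑ a ∈ s with lvl a = m, w a = 0) (c : ι → κ → R) :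
    ∑ a ∈ s, c (deg a) (lvl a) • w a = 0 := by
  rw [← Finset.sum_fiberwise_of_maps_to
    fun a ha => Finset.mem_image_of_mem (fun a => (deg a, lvl a)) ha]
  refine Finset.sum_eq_zero fun q _ => ?_
  have hfiber : ∑ a ∈ {a ∈ s | lvl a = q.2} with deg a = q.1, w a = 0 :=
    hM.sum_filter_eq_zero_of_sum_eq_zero (fun a ha => hw a (Finset.mem_filter.1 ha).1) (h q.2) q.1
  calc ∑ a ∈ s with (deg a, lvl a) = q, c (deg a) (lvl a) • w a
      = ∑ a ∈ s with (deg a, lvl a) = q, c q.1 q.2 • w a :=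
        Finset.sum_congr rfl fun a ha => by rw [← (Finset.mem_filter.1 ha).2]
    _ = c q.1 q.2 • ∑ a ∈ {a ∈ s | lvl a = q.2} with deg a = q.1, w a := by
        rw [Finset.smul_sum, Finset.filter_filter]
        congr 2
        ext a
        simp [Prod.ext_iff, and_comm]
    _ = 0 := by rw [hfiber, smul_zero]

end GradedSums

section Homogeneous

variable {R V W : Type*} [Semiring R] [AddCommMonoid V] [Module R V] [AddCommMonoid W]
  [Module R W] {Vg : ℕ → Submodule R V} {Wg : ℕ → Submodule R W} {s : ℕ} {d : ℕ → V →ₗ[R] W}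

/-- For `k ≥ 1`, `d k` is homogeneous of degree `s - k ∈ ℤ`; the second clause is the convention
`W_j = 0` for `j < 0`. -/
def HomogeneousFamily (Vg : ℕ → Submodule R V) (Wg : ℕ → Submodule R W) (s : ℕ)
    (d : ℕ → V →ₗ[R] W) : Prop :=
  ∀ k, 1 ≤ k → ∀ i, ∀ x ∈ Vg i, (k ≤ i + s → d k x ∈ Wg (i + s - k)) ∧ (i + s < k → d k x = 0)

namespace HomogeneousFamily

variable {i : ℕ} {x : V}

theorem apply_eq_zero (hd : HomogeneousFamily Vg Wg s d) (hx : x ∈ Vg i) {k : ℕ}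
    (hk : i + s < k) : d k x = 0 :=
  (hd k (by omega) i x hx).2 hk

theorem apply_mem (hd : HomogeneousFamily Vg Wg s d) (hd0 : d 0 = 0) (hx : x ∈ Vg i) (k : ℕ) :
    d k x ∈ Wg (i + s - k) := by
  obtain rfl | hk := Nat.eq_zero_or_pos k
  · rw [hd0]
    exact zero_mem _
  by_cases hki : k ≤ i + s
  · exact (hd k hk i x hx).1 hki
  · rw [hd.apply_eq_zero hx (by omega)]
    exact zero_mem _

theorem pow_smul_apply (hd : HomogeneousFamily Vg Wg s d) (hx : x ∈ Vg i) (c : R) (q j k : ℕ) :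
    c ^ (q - (i + s - j) - (j + k)) • d j x = c ^ (q - (i + s) - k) • d j x := by
  by_cases hj : j ≤ i + s
  · congr 2
    omega
  · rw [hd.apply_eq_zero hx (by omega), smul_zero, smul_zero]

end HomogeneousFamily

end Homogeneous

section PolynomialModule

open PolynomialModule

variable {R V W β : Type*} [CommRing R] [AddCommGroup V] [Module R V] [AddCommGroup W] [Module R W]

theorem coeff_map_sum_single {e : ℕ → V →ₗ[R] W}
    (DE : PolynomialModule R V →ₗ[R[X]] PolynomialModule R W)
    (hDE : ∀ k v, DE (single R k v) = ∑ᶠ j, single R (j + k) (e j v))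
    (B : Finset β) (v : β → V) (kdeg : β → ℕ) (J : Finset ℕ)
    (hJ : ∀ b ∈ B, ∀ j ∉ J, e j (v b) = 0) (m : ℕ) :
    (DE (∑ b ∈ B, single R (kdeg b) (v b))).coeff m
      = ∑ a ∈ B ×ˢ J with a.2 + kdeg a.1 = m, e a.2 (v a.1) := by
  have hfin : ∀ b ∈ B, DE (single R (kdeg b) (v b)) = ∑ j ∈ J, single R (j + kdeg b) (e j (v b)) :=
    fun b hb => (hDE _ _).trans <| finsum_eq_sum_of_support_subset _ fun j hj => by
      by_contra hjJ
      exact hj (show single R _ (e j (v b)) = 0 by rw [hJ b hb j hjJ, single_zero])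
  rw [map_sum, Finset.sum_congr rfl hfin, Finset.sum_filter, Finset.sum_product]
  simp only [PolynomialModule.coeff_sum, Finsupp.finsetSum_apply, coeff_single,
    Finsupp.single_apply]

end PolynomialModule

section AffineDifferential

open PolynomialModule

variable {R V W : Type*} [CommRing R] [AddCommGroup V] [Module R V] [AddCommGroup W] [Module R W]

/-- The paper's `D_t = Σ_k (t • d'_k + d''_k)`. -/
noncomputable def affineDifferential (d' d'' : ℕ → V →ₗ[R] W) (t : R) (y : V) : W :=
  ∑ᶠ j, (t • d' j y + d'' j y)

variable {Vg : ℕ → Submodule R V} {Wg : ℕ → Submodule R W} {d' d'' : ℕ → V →ₗ[R] W}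
  {β : Type*} {B : Finset β} {v : β → V} {ideg kdeg : β → ℕ}

theorem affineDifferential_sum_smul {J : Finset ℕ}
    (hJ : ∀ b ∈ B, ∀ j ∉ J, d' j (v b) = 0 ∧ d'' j (v b) = 0) (c : β → R) (t : R) :
    affineDifferential d' d'' t (∑ b ∈ B, c b • v b)
      = ∑ a ∈ B ×ˢ J, (t • c a.1 • d' a.2 (v a.1) + c a.1 • d'' a.2 (v a.1)) := by
  have hterm : ∀ j, t • d' j (∑ b ∈ B, c b • v b) + d'' j (∑ b ∈ B, c b • v b)
      = ∑ b ∈ B, (t • c b • d' j (v b) + c b • d'' j (v b)) := fun j => by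
    simp only [map_sum, _root_.map_smul, Finset.smul_sum, Finset.sum_add_distrib]
  have hsupp : (Function.support fun j => t • d' j (∑ b ∈ B, c b • v b)
      + d'' j (∑ b ∈ B, c b • v b)) ⊆ J := fun j hj => by
    by_contra hjJ
    refine hj ?_
    simp only [hterm]
    exact Finset.sum_eq_zero fun b hb => by simp [hJ b hb j hjJ]
  rw [affineDifferential, finsum_eq_sum_of_support_subset _ hsupp, Finset.sum_product,
    Finset.sum_comm]
  exact Finset.sum_congr rfl fun j _ => hterm j

theorem smul_pow_smul_add_pow_smul_eq_bidegree (hd' : HomogeneousFamily Vg Wg 0 d')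
    (hd'' : HomogeneousFamily Vg Wg 1 d'') {i k N : ℕ} {x : V} (hx : x ∈ Vg i) (t : R) (j : ℕ)
    (hN : x ≠ 0 → i + k ≤ N) :
    t • t ^ (N - i - k) • d' j x + t ^ (N - i - k) • d'' j x
      = t ^ (N + 1 - (i + 0 - j) - (j + k)) • d' j x
        + t ^ (N + 1 - (i + 1 - j) - (j + k)) • d'' j x := by
  rw [hd'.pow_smul_apply hx, hd''.pow_smul_apply hx, smul_smul, ← pow_succ']
  by_cases h0 : x = 0
  · simp [h0]
  have := hN h0
  congr 3 <;> omega

theorem affineDifferential_sum_pow_smul_eq_zero (hWg : iSupIndep Wg) (hd'0 : d' 0 = 0)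
    (hd''0 : d'' 0 = 0) (hd' : HomogeneousFamily Vg Wg 0 d') (hd'' : HomogeneousFamily Vg Wg 1 d'')
    (DE : PolynomialModule R V →ₗ[R[X]] PolynomialModule R W)
    (hDE : ∀ k v, DE (single R k v) = ∑ᶠ j, single R (j + k) (d' j v + d'' j v))
    (hv : ∀ b ∈ B, v b ∈ Vg (ideg b))
    (hE : DE (∑ b ∈ B, single R (kdeg b) (v b)) = 0)
    (t : R) (N : ℕ) (hN : ∀ b ∈ B, v b ≠ 0 → ideg b + kdeg b ≤ N) :
    affineDifferential d' d'' t (∑ b ∈ B, t ^ (N - ideg b - kdeg b) • v b) = 0 := by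
  classical
  set T := B ×ˢ Finset.range (N + 2)
  have hJ : ∀ b ∈ B, ∀ j ∉ Finset.range (N + 2), d' j (v b) = 0 ∧ d'' j (v b) = 0 := by
    intro b hb j hj
    rw [Finset.mem_range, not_lt] at hj
    by_cases h0 : v b = 0
    · simp [h0]
    have := hN b hb h0
    exact ⟨hd'.apply_eq_zero (hv b hb) (by omega), hd''.apply_eq_zero (hv b hb) (by omega)⟩
  -- the terms `d'_j v_b` (left) and `d''_j v_b` (right), with their degrees in `W` and in `ε`
  let w : (β × ℕ) ⊕ (β × ℕ) → W := Sum.elim (fun a => d' a.2 (v a.1)) (fun a => d'' a.2 (v a.1))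
  let deg : (β × ℕ) ⊕ (β × ℕ) → ℕ :=
    Sum.elim (fun a => ideg a.1 + 0 - a.2) (fun a => ideg a.1 + 1 - a.2)
  let lvl : (β × ℕ) ⊕ (β × ℕ) → ℕ := Sum.elim (fun a => a.2 + kdeg a.1) (fun a => a.2 + kdeg a.1)
  have hw : ∀ a ∈ T.disjSum T, w a ∈ Wg (deg a) := by
    rintro (⟨b, j⟩ | ⟨b, j⟩) ha <;>
      simp only [Finset.inl_mem_disjSum, Finset.inr_mem_disjSum, T, Finset.mem_product] at ha
    · exact hd'.apply_mem hd'0 (hv b ha.1) j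
    · exact hd''.apply_mem hd''0 (hv b ha.1) j
  have hlvl : ∀ m, ∑ a ∈ T.disjSum T with lvl a = m, w a = 0 := by
    intro m
    have hcoeff := coeff_map_sum_single (e := fun j => d' j + d'' j) DE (by simpa using hDE)
      B v kdeg (Finset.range (N + 2)) (fun b hb j hj => by simp [hJ b hb j hj]) m
    simp only [hE, PolynomialModule.coeff_zero, Finsupp.coe_zero, Pi.zero_apply,
      Finset.sum_filter] at hcoeff
    rw [Finset.sum_filter, Finset.sum_disjSum, ← Finset.sum_add_distrib]
    refine (Finset.sum_congr rfl fun a _ => ?_).trans hcoeff.symm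
    show (if a.2 + kdeg a.1 = m then d' a.2 (v a.1) else 0)
      + (if a.2 + kdeg a.1 = m then d'' a.2 (v a.1) else 0) = _
    rw [ite_add_ite, add_zero, LinearMap.add_apply]
  have hDt : affineDifferential d' d'' t (∑ b ∈ B, t ^ (N - ideg b - kdeg b) • v b)
      = ∑ a ∈ T.disjSum T, t ^ (N + 1 - deg a - lvl a) • w a := by
    rw [affineDifferential_sum_smul hJ, Finset.sum_disjSum, ← Finset.sum_add_distrib]
    refine Finset.sum_congr rfl fun ⟨b, j⟩ ha => ?_
    have hb := (Finset.mem_product.1 ha).1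
    exact smul_pow_smul_add_pow_smul_eq_bidegree hd' hd'' (hv b hb) t j fun h0 => hN b hb h0
  rw [hDt]
  exact hWg.sum_smul_eq_zero_of_sum_filter_eq_zero hw hlvl fun p m => t ^ (N + 1 - p - m)

end AffineDifferential

theorem stmt7_general (V W : Type*)
    [AddCommGroup V] [Module ℝ V] [AddCommGroup W] [Module ℝ W]
    (Vg : ℕ → Submodule ℝ V) (Wg : ℕ → Submodule ℝ W)
    (hWg : DirectSum.IsInternal Wg)
    (d' d'' : ℕ → V →ₗ[ℝ] W) (hd'0 : d' 0 = 0) (hd''0 : d'' 0 = 0)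
    -- `d'_k` is homogeneous of degree `-k`
    (hd' : ∀ k, 1 ≤ k → ∀ i, ∀ x ∈ Vg i,
      (k ≤ i → d' k x ∈ Wg (i - k)) ∧ (i < k → d' k x = 0))
    -- `d''_k` is homogeneous of degree `1 - k`
    (hd'' : ∀ k, 1 ≤ k → ∀ i, ∀ x ∈ Vg i,
      (k ≤ i + 1 → d'' k x ∈ Wg (i + 1 - k)) ∧ (i + 1 < k → d'' k x = 0))
    -- the `ℝ[ε]`-linear operator `D_ε = Σ_k ε^k·(d'_k + d''_k)`
    (DE : PolynomialModule ℝ V →ₗ[Polynomial ℝ] PolynomialModule ℝ W)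
    (hDE : ∀ (k : ℕ) (v : V),
      DE (PolynomialModule.single ℝ k v)
        = ∑ᶠ j, PolynomialModule.single ℝ (j + k) (d' j v + d'' j v))
    -- the elements `F_k = Σ_i F_k^(i)` with homogeneous components `F_k^(i) ∈ V_i`
    (n : ℕ) (Fc : ℕ → ℕ → V)
    (hFc : ∀ k i, Fc k i ∈ Vg i)
    -- hypothesis: `D_ε(Σ_k ε^k F_k) = 0` in `W[ε]`
    (hE : DE (∑ k ∈ Finset.range (n + 1),
      PolynomialModule.single ℝ k (∑ᶠ i, Fc k i)) = 0) :
    ∀ t : ℝ, t ≠ 0 → ∀ N : ℕ, (∀ k i, Fc k i ≠ 0 → i + k ≤ N) →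
      (∑ᶠ j,
        (t • d' j (∑ k ∈ Finset.range (n + 1), ∑ i ∈ Finset.range (N + 1),
            t ^ (N - i - k) • Fc k i)
          + d'' j (∑ k ∈ Finset.range (n + 1), ∑ i ∈ Finset.range (N + 1),
            t ^ (N - i - k) • Fc k i))) = 0 := by
  intro t _ N hN
  have hF : ∀ k, ∑ᶠ i, Fc k i = ∑ i ∈ Finset.range (N + 1), Fc k i := fun k =>
    finsum_eq_sum_of_support_subset _ fun i hi => by
      have := hN k i hi
      simp only [Finset.coe_range, Set.mem_Iio]
      omega
  have hE' : DE (∑ b ∈ Finset.range (n + 1) ×ˢ Finset.range (N + 1),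
      PolynomialModule.single ℝ b.1 (Fc b.1 b.2)) = 0 := by
    have hsingle : ∀ k, PolynomialModule.single ℝ k (∑ i ∈ Finset.range (N + 1), Fc k i)
        = ∑ i ∈ Finset.range (N + 1), PolynomialModule.single ℝ k (Fc k i) := fun k =>
      map_sum (PolynomialModule.lsingle ℝ k) _ _
    simpa only [Finset.sum_product, hF, hsingle] using hE
  have key := affineDifferential_sum_pow_smul_eq_zero hWg.submodule_iSupIndep hd'0 hd''0 hd' hd''
    DE hDE (fun b _ => hFc b.1 b.2) hE' t N fun b _ hb => hN b.1 b.2 hb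
  rwa [Finset.sum_product] at key

theorem stmt7 (V W : Type*)
    [AddCommGroup V] [Module ℝ V] [AddCommGroup W] [Module ℝ W]
    (Vg : ℕ → Submodule ℝ V) (Wg : ℕ → Submodule ℝ W)
    (hVg : DirectSum.IsInternal Vg) (hWg : DirectSum.IsInternal Wg)
    (d' d'' : ℕ → V →ₗ[ℝ] W) (hd'0 : d' 0 = 0) (hd''0 : d'' 0 = 0)
    -- `d'_k` is homogeneous of degree `-k`
    (hd' : ∀ k, 1 ≤ k → ∀ i, ∀ x ∈ Vg i,
      (k ≤ i → d' k x ∈ Wg (i - k)) ∧ (i < k → d' k x = 0))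
    -- `d''_k` is homogeneous of degree `1 - k`
    (hd'' : ∀ k, 1 ≤ k → ∀ i, ∀ x ∈ Vg i,
      (k ≤ i + 1 → d'' k x ∈ Wg (i + 1 - k)) ∧ (i + 1 < k → d'' k x = 0))
    -- the `ℝ[ε]`-linear operator `D_ε = Σ_k ε^k·(d'_k + d''_k)`
    (DE : PolynomialModule ℝ V →ₗ[Polynomial ℝ] PolynomialModule ℝ W)
    (hDE : ∀ (k : ℕ) (v : V),
      DE (PolynomialModule.single ℝ k v)
        = ∑ᶠ j, PolynomialModule.single ℝ (j + k) (d' j v + d'' j v))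
    -- the elements `F_k = Σ_i F_k^(i)` with homogeneous components `F_k^(i) ∈ V_i`
    (n : ℕ) (Fc : ℕ → ℕ → V)
    (hFc : ∀ k i, Fc k i ∈ Vg i)
    (hFfin : ∀ k, (Function.support (Fc k)).Finite)
    -- hypothesis: `D_ε(Σ_k ε^k F_k) = 0` in `W[ε]`
    (hE : DE (∑ k ∈ Finset.range (n + 1),
      PolynomialModule.single ℝ k (∑ᶠ i, Fc k i)) = 0) :
    ∀ t : ℝ, t ≠ 0 → ∀ N : ℕ, (∀ k i, Fc k i ≠ 0 → i + k ≤ N) →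
      (∑ᶠ j,
        (t • d' j (∑ k ∈ Finset.range (n + 1), ∑ i ∈ Finset.range (N + 1),
            t ^ (N - i - k) • Fc k i)
          + d'' j (∑ k ∈ Finset.range (n + 1), ∑ i ∈ Finset.range (N + 1),
            t ^ (N - i - k) • Fc k i))) = 0 :=
  stmt7_general V W Vg Wg hWg d' d'' hd'0 hd''0 hd' hd'' DE hDE n Fc hFc hE
end

section
/- Polynomial dependence on t of the normalized PBW representative (the key computation in the proof of the paper's Lemma 6.4): for every u ∈ U(g) there exist finitely many elements w₀,…,w_m ∈ M such that for every t ∈ K, u − Σ_{k=0}^m t^k·w_k ∈ I_t. In other words, the unique representative in M of the class of u modulo I_t depends polynomially on t. -/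
/-!
Let `P ⊆ U(g)` be the subspace of those `u` that are congruent modulo `I_t`, for every `t`, to
`∑ tᵏ wₖ` with all `wₖ ∈ M`. Clearly `M ⊆ P`. If `v ∈ P` and `H ∈ h`, then `v·H ≡ -t λ(H) v`
modulo `I_t`, and multiplying a representative by `t` keeps it polynomial, so `v·H ∈ P`.
Products of `n` elements of `g` lie in `P` by induction on `n`: split each factor as `H + y` with
`H ∈ h`, `y ∈ q`; an `h`-part can be moved to the right end at the cost of commutators, which have
lower degree, and a product of `n` basis vectors of `q` equals the ordered monomial with the same
multiplicities modulo products of degree `n - 1`.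
-/

noncomputable section

open UniversalEnvelopingAlgebra

attribute [local instance] LieRing.ofAssociativeRing

section PolynomialFamilies

variable {R A : Type*} [CommRing R] [AddCommGroup A] [Module R A]

def monomialFamily (k : ℕ) : A →ₗ[R] (R → A) := LinearMap.pi fun t => t ^ k • LinearMap.id

@[simp] lemma monomialFamily_apply (k : ℕ) (a : A) (t : R) : monomialFamily k a t = t ^ k • a := rfl

def polynomialFamilies (M : Submodule R A) : Submodule R (R → A) :=
  ⨆ k, M.map (monomialFamily k)

def varSmul : (R → A) →ₗ[R] (R → A) := LinearMap.pi fun t => t • LinearMap.proj t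

@[simp] lemma varSmul_apply (f : R → A) (t : R) : varSmul f t = t • f t := rfl

lemma varSmul_comp_monomialFamily (k : ℕ) :
    varSmul ∘ₗ monomialFamily k = (monomialFamily (k + 1) : A →ₗ[R] (R → A)) := by
  ext a t
  simp [pow_succ', mul_smul]

lemma map_varSmul_polynomialFamilies_le (M : Submodule R A) :
    (polynomialFamilies M).map varSmul ≤ polynomialFamilies M := by
  rw [polynomialFamilies, Submodule.map_iSup]
  refine iSup_le fun k => ?_
  rw [← Submodule.map_comp, varSmul_comp_monomialFamily]
  exact le_iSup (fun k => M.map (monomialFamily k)) (k + 1)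

lemma map_varSmul_pi_le (I : R → Submodule R A) :
    (Submodule.pi Set.univ I).map varSmul ≤ Submodule.pi Set.univ I := by
  rintro _ ⟨f, hf, rfl⟩ t -
  exact (I t).smul_mem t (hf t trivial)

lemma exists_sum_range_of_mem_polynomialFamilies {M : Submodule R A} {f : R → A}
    (hf : f ∈ polynomialFamilies M) :
    ∃ (m : ℕ) (w : ℕ → A), (∀ k, w k ∈ M) ∧ ∀ t, f t = ∑ k ∈ Finset.range (m + 1), t ^ k • w k := by
  obtain ⟨s, hs⟩ := Submodule.mem_iSup_iff_exists_finset.mp hf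
  have hsm : s ⊆ Finset.range (s.sup id + 1) := fun k hk =>
    Finset.mem_range_succ_iff.mpr (Finset.le_sup (f := id) hk)
  obtain ⟨μ, hμ⟩ := (Submodule.mem_iSup_finset_iff_exists_sum _ f).mp <|
    biSup_mono (f := fun k => M.map (monomialFamily k)) (fun k hk => hsm hk) hs
  choose w hwM hw using fun k => Submodule.mem_map.mp (μ k).2
  refine ⟨s.sup id, w, hwM, fun t => ?_⟩
  simp [← hμ, Finset.sum_apply, ← hw]

end PolynomialFamilies

section Representatives

variable {R A : Type*} [CommRing R] [Ring A] [Algebra R A] (M : Submodule R A) (I : R → Ideal A)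

/-- The `u : A` such that for every `t`, `u` is congruent modulo `I t` to `∑ tᵏ • wₖ` with fixed
coefficients `wₖ ∈ M`: the constant family `u` is a polynomial family plus an `I`-valued one. -/
def polyRepresentable : Submodule R A :=
  (polynomialFamilies M ⊔ Submodule.pi Set.univ fun t => (I t).restrictScalars R).comap
    (monomialFamily 0)

lemma le_polyRepresentable : M ≤ polyRepresentable M I := fun _ hu =>
  le_sup_left (a := polynomialFamilies M) <|
    le_iSup (fun k => M.map (monomialFamily k)) 0 (Submodule.mem_map_of_mem hu)

variable {M I}

lemma mul_mem_polyRepresentable {a : A} {c : R} (ha : ∀ t, a + (t * c) • 1 ∈ I t) {v : A}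
    (hv : v ∈ polyRepresentable M I) : v * a ∈ polyRepresentable M I := by
  have hdecomp : (monomialFamily 0 (v * a) : R → A) =
      (fun t => v * (a + (t * c) • 1)) - c • varSmul (monomialFamily 0 v) := by
    ext t
    simp [mul_add, smul_smul, mul_comm c t]
  have hideal : (fun t => v * (a + (t * c) • 1)) ∈
      Submodule.pi Set.univ fun t => (I t).restrictScalars R :=
    fun t _ => (I t).mul_mem_left v (ha t)
  have hshift : varSmul (monomialFamily 0 v) ∈
      polynomialFamilies M ⊔ Submodule.pi Set.univ fun t => (I t).restrictScalars R := by
    refine (Submodule.map_sup _ _ _).trans_le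
      (sup_le_sup (map_varSmul_polynomialFamilies_le M) (map_varSmul_pi_le _))
      (Submodule.mem_map_of_mem hv)
  rw [polyRepresentable, Submodule.mem_comap, hdecomp]
  exact sub_mem (Submodule.mem_sup_right hideal) (Submodule.smul_mem _ c hshift)

lemma exists_sub_sum_range_mem_of_mem_polyRepresentable {u : A}
    (hu : u ∈ polyRepresentable M I) :
    ∃ (m : ℕ) (w : ℕ → A), (∀ k, w k ∈ M) ∧
      ∀ t, u - ∑ k ∈ Finset.range (m + 1), t ^ k • w k ∈ I t := by
  obtain ⟨f, hf, j, hj, hfj⟩ := Submodule.mem_sup.mp hu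
  obtain ⟨m, w, hwM, hw⟩ := exists_sum_range_of_mem_polynomialFamilies hf
  refine ⟨m, w, hwM, fun t => ?_⟩
  have hu_t : u = f t + j t := by simpa using (congr_fun hfj t).symm
  rw [hu_t, ← hw, add_sub_cancel_left]
  exact hj t trivial

end Representatives

lemma List.perm_flatMap_finRange_replicate_count {p : ℕ} (l : List (Fin p)) :
    l.Perm ((List.finRange p).flatMap fun i => List.replicate (l.count i) i) := by
  refine List.perm_iff_count.mpr fun a => ?_
  rw [List.count_flatMap]
  simp only [Function.comp_def, List.count_replicate, beq_iff_eq]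
  rw [← List.ofFn_eq_map, List.sum_ofFn]
  simp

lemma List.prod_map_flatMap_finRange_replicate {M : Type*} [Monoid M] {p : ℕ} (f : Fin p → M)
    (α : Fin p → ℕ) :
    (((List.finRange p).flatMap fun i => List.replicate (α i) i).map f).prod
      = (List.ofFn fun i => f i ^ α i).prod := by
  simp [List.flatMap_def, List.prod_flatten, List.ofFn_eq_map, Function.comp_def]

namespace UniversalEnvelopingAlgebra

variable {R L : Type*} [CommRing R] [LieRing L] [LieAlgebra R L]

local notation "𝔘" => UniversalEnvelopingAlgebra R L

local notation "V" => LinearMap.range (LieHom.toLinearMap (ι R : L →ₗ⁅R⁆ 𝔘))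

lemma ι_lie (x y : L) : (ι R ⁅x, y⁆ : 𝔘) = ι R x * ι R y - ι R y * ι R x := by
  rw [LieHom.map_lie, LieRing.of_associative_ring_bracket]

lemma ι_mem_range (x : L) : (ι R x : 𝔘) ∈ V := ⟨x, rfl⟩

lemma list_prod_map_ι_mem_pow (l : List L) : (l.map (ι R)).prod ∈ V ^ l.length := by
  induction l with
  | nil => exact Submodule.one_le.mp (pow_zero _).ge
  | cons x l ih =>
    rw [List.map_cons, List.prod_cons, List.length_cons, pow_succ']
    exact Submodule.mul_mem_mul (ι_mem_range x) ih

lemma ι_mul_sub_mul_ι_mem_pow (x : L) {n : ℕ} {v : 𝔘} (hv : v ∈ V ^ n) :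
    ι R x * v - v * ι R x ∈ V ^ n := by
  induction hv using Submodule.pow_induction_on_left' with
  | algebraMap r => simp [Algebra.commutes]
  | add a b i _ _ ha hb =>
    convert add_mem ha hb using 1
    noncomm_ring
  | mem_mul a ha i b hb ih =>
    obtain ⟨y, rfl⟩ := ha
    simp only [LieHom.coe_toLinearMap]
    have key : ι R x * (ι R y * b) - ι R y * b * ι R x
        = ι R ⁅x, y⁆ * b + ι R y * (ι R x * b - b * ι R x) := by
      rw [ι_lie]; noncomm_ring
    rw [key, pow_succ']
    exact add_mem (Submodule.mul_mem_mul (ι_mem_range _) hb)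
      (Submodule.mul_mem_mul (ι_mem_range _) ih)

lemma prod_map_ι_sub_mem_pow_of_perm {l l' : List L} (hl : l.Perm l') {n : ℕ}
    (hn : l.length = n + 1) : (l.map (ι R)).prod - (l'.map (ι R)).prod ∈ V ^ n := by
  induction hl generalizing n with
  | nil => simp at hn
  | cons x hl ih =>
    rcases n with _ | n
    · obtain rfl : _ = [] := List.length_eq_zero_iff.mp (by simpa using hn)
      obtain rfl := List.nil_perm.mp hl
      simp
    · simp only [List.map_cons, List.prod_cons, ← mul_sub]
      rw [pow_succ']
      exact Submodule.mul_mem_mul (ι_mem_range x) (ih (by simpa using hn))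
  | swap x y l =>
    obtain rfl : n = l.length + 1 := by simp at hn; omega
    have key : ((y :: x :: l).map (ι R)).prod - ((x :: y :: l).map (ι R)).prod
        = (ι R ⁅y, x⁆ : 𝔘) * (l.map (ι R)).prod := by
      simp only [List.map_cons, List.prod_cons, ι_lie]; noncomm_ring
    rw [key, pow_succ']
    exact Submodule.mul_mem_mul (ι_mem_range _) (list_prod_map_ι_mem_pow l)
  | trans h₁₂ _ ih₁₂ ih₂₃ =>
    rw [← sub_add_sub_cancel]
    exact add_mem (ih₁₂ hn) (ih₂₃ (h₁₂.length_eq ▸ hn))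

lemma adjoin_range_ι : Algebra.adjoin R (Set.range (ι R : L →ₗ⁅R⁆ 𝔘)) = ⊤ := by
  have hι : Set.range (ι R : L →ₗ⁅R⁆ 𝔘) = mkAlgHom R L '' Set.range (TensorAlgebra.ι R) := by
    rw [← Set.range_comp]; rfl
  rw [hι, ← AlgHom.map_adjoin, TensorAlgebra.adjoin_range_ι, Algebra.map_top,
    AlgHom.range_eq_top]
  exact RingCon.mkₐ_surjective _

lemma exists_mem_pow_of_mem_closure {x : 𝔘} (hx : x ∈ Submonoid.closure (Set.range (ι R))) :
    ∃ n, x ∈ V ^ n := by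
  induction hx using Submonoid.closure_induction with
  | mem _ hy =>
    obtain ⟨y, rfl⟩ := hy
    exact ⟨1, by simp⟩
  | one => exact ⟨0, Submodule.one_le.mp (pow_zero _).ge⟩
  | mul a b _ _ ha hb =>
    obtain ⟨m, ha⟩ := ha
    obtain ⟨n, hb⟩ := hb
    exact ⟨m + n, pow_add (V : Submodule R 𝔘) m n ▸ Submodule.mul_mem_mul ha hb⟩

lemma eq_top_of_forall_pow_le {P : Submodule R 𝔘} (hP : ∀ n, V ^ n ≤ P) :
    P = ⊤ := by
  refine eq_top_iff.mpr fun u _ => ?_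
  have hu : u ∈ Subalgebra.toSubmodule (Algebra.adjoin R (Set.range (ι R : L →ₗ⁅R⁆ 𝔘))) := by
    simp [adjoin_range_ι]
  rw [Algebra.adjoin_eq_span] at hu
  refine Submodule.span_le.mpr (fun x hx => ?_) hu
  obtain ⟨n, hn⟩ := exists_mem_pow_of_mem_closure hx
  exact hP n hn

lemma range_ι_mul_pow_le {h q : Submodule R L} (hhq : h ⊔ q = ⊤) (m : ℕ) :
    V * (q.map (ι R : L →ₗ⁅R⁆ 𝔘).toLinearMap) ^ m ≤
      (q.map (ι R : L →ₗ⁅R⁆ 𝔘).toLinearMap) ^ m * h.map (ι R : L →ₗ⁅R⁆ 𝔘).toLinearMap ⊔ V ^ m ⊔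
        (q.map (ι R : L →ₗ⁅R⁆ 𝔘).toLinearMap) ^ (m + 1) := by
  refine Submodule.mul_le.mpr fun a ha b hb => ?_
  obtain ⟨x, rfl⟩ := ha
  obtain ⟨H, hH, y, hy, rfl⟩ := Submodule.mem_sup.mp (hhq.ge (Submodule.mem_top (x := x)))
  have hbV : b ∈ V ^ m := pow_le_pow_left' LinearMap.map_le_range m hb
  have split : (ι R (H + y) : 𝔘) * b = b * ι R H + (ι R H * b - b * ι R H) + ι R y * b := by
    rw [map_add]; noncomm_ring
  simp only [LieHom.coe_toLinearMap]
  rw [split, pow_succ']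
  exact add_mem (add_mem (Submodule.mem_sup_left (Submodule.mem_sup_left
    (Submodule.mul_mem_mul hb (Submodule.mem_map_of_mem hH))))
    (Submodule.mem_sup_left (Submodule.mem_sup_right (ι_mul_sub_mul_ι_mem_pow H hbV))))
    (Submodule.mem_sup_right (Submodule.mul_mem_mul (Submodule.mem_map_of_mem hy) hb))

lemma eq_top_of_mul_ι_mem {P : Submodule R 𝔘} {h q : Submodule R L} (hhq : h ⊔ q = ⊤)
    (hone : 1 ∈ P) (hmul : ∀ v ∈ P, ∀ x ∈ h, v * ι R x ∈ P)
    (hq : ∀ n, V ^ n ≤ P →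
      (q.map (ι R : L →ₗ⁅R⁆ 𝔘).toLinearMap) ^ (n + 1) ≤ P) :
    P = ⊤ := by
  set Vq := q.map (ι R : L →ₗ⁅R⁆ 𝔘).toLinearMap
  set Vh := h.map (ι R : L →ₗ⁅R⁆ 𝔘).toLinearMap
  refine eq_top_of_forall_pow_le fun n => ?_
  induction n with
  | zero => exact (pow_zero _).trans_le (Submodule.one_le.mpr hone)
  | succ n ih =>
    have hVh : V ^ n * Vh ≤ P := by
      refine Submodule.mul_le.mpr fun v hv _ ha => ?_
      obtain ⟨x, hx, rfl⟩ := ha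
      exact hmul v (ih hv) x hx
    have mixed : ∀ k m, k + m = n + 1 → V ^ k * Vq ^ m ≤ P := by
      intro k
      induction k with
      | zero => intro m hm; simpa [← hm] using hq n ih
      | succ k ihk =>
        intro m hkm
        have hVq : V ^ k * Vq ^ m ≤ V ^ n := by
          rw [show n = k + m by omega, pow_add]
          exact mul_le_mul_right (pow_le_pow_left' LinearMap.map_le_range m) _
        calc V ^ (k + 1) * Vq ^ m = V ^ k * (V * Vq ^ m) := by rw [pow_succ, mul_assoc]
          _ ≤ V ^ k * (Vq ^ m * Vh ⊔ V ^ m ⊔ Vq ^ (m + 1)) :=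
            mul_le_mul_right (range_ι_mul_pow_le hhq m) _
          _ = V ^ k * Vq ^ m * Vh ⊔ V ^ (k + m) ⊔ V ^ k * Vq ^ (m + 1) := by
            rw [Submodule.mul_sup, Submodule.mul_sup, mul_assoc, ← pow_add]
          _ ≤ P := sup_le (sup_le ((mul_le_mul_left hVq _).trans hVh)
                (ih.trans_eq' (by rw [show k + m = n by omega])))
                (ihk (m + 1) (by omega))
    simpa using mixed (n + 1) 0 rfl

lemma map_ι_eq_span_range {ι' : Type*} {q : Submodule R L} (Q : Module.Basis ι' R q) :
    q.map (ι R : L →ₗ⁅R⁆ 𝔘).toLinearMap = Submodule.span R (Set.range fun i => ι R (Q i : L)) := by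
  conv_lhs => rw [← Submodule.map_subtype_top q, ← Q.span_eq, Submodule.map_span,
    Submodule.map_span, ← Set.range_comp, ← Set.range_comp]
  rfl

end UniversalEnvelopingAlgebra

lemma pow_map_ι_le_Mspan_sup {g : Type*} [LieRing g] [LieAlgebra ℝ g] {q : Submodule ℝ g} {p : ℕ}
    (Q : Module.Basis (Fin p) ℝ q) (n : ℕ) :
    (q.map (ι ℝ : g →ₗ⁅ℝ⁆ UniversalEnvelopingAlgebra ℝ g).toLinearMap) ^ (n + 1) ≤
      Mspan Q ⊔ LinearMap.range (ι ℝ : g →ₗ⁅ℝ⁆ UniversalEnvelopingAlgebra ℝ g).toLinearMap ^ n := by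
  rw [map_ι_eq_span_range Q, Submodule.span_pow, Submodule.span_le]
  intro a ha
  obtain ⟨f, rfl⟩ := Set.mem_pow.mp ha
  choose k hk using fun j => (f j).2
  set l := List.ofFn k
  set ordered := (List.finRange p).flatMap fun i => List.replicate (l.count i) i
  have hprod : (List.ofFn fun j => ((f j : UniversalEnvelopingAlgebra ℝ g))).prod
      = ((l.map fun i => (Q i : g)).map (ι ℝ)).prod := by
    simp [l, List.map_ofFn, Function.comp_def, hk]
  have hperm := l.perm_flatMap_finRange_replicate_count.map fun i => (Q i : g)
  have hdiff := prod_map_ι_sub_mem_pow_of_perm (R := ℝ) hperm (n := n) (by simp [l])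
  have hordered : ((ordered.map fun i => (Q i : g)).map (ι ℝ)).prod ∈ Mspan Q := by
    refine Submodule.subset_span ⟨fun i => l.count i, ?_⟩
    rw [List.map_map]
    exact List.prod_map_flatMap_finRange_replicate _ _
  rw [hprod, ← sub_add_cancel ((l.map fun i => (Q i : g)).map (ι ℝ)).prod]
  exact add_mem (Submodule.mem_sup_right hdiff) (Submodule.mem_sup_left hordered)

theorem stmt14_general (g : Type*) [LieRing g] [LieAlgebra ℝ g]
    (h : LieSubalgebra ℝ g) (lam : h →ₗ[ℝ] ℝ)
    (q : Submodule ℝ g) (hq : IsCompl h.toSubmodule q)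
    (p : ℕ) (Q : Module.Basis (Fin p) ℝ q)
    (u : UniversalEnvelopingAlgebra ℝ g) :
    ∃ (m : ℕ) (w : ℕ → UniversalEnvelopingAlgebra ℝ g),
      (∀ k, w k ∈ Mspan Q) ∧
      ∀ t : ℝ, u - (∑ k ∈ Finset.range (m + 1), t ^ k • w k) ∈ It h lam t := by
  have hone : (1 : UniversalEnvelopingAlgebra ℝ g) ∈ Mspan Q := Submodule.subset_span ⟨0, by simp⟩
  have hgen (H : h) (t : ℝ) : ι ℝ (H : g) + (t * lam H) • 1 ∈ It h lam t :=
    Ideal.subset_span ⟨H, rfl⟩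
  have hreps : polyRepresentable (Mspan Q) (It h lam) = ⊤ :=
    eq_top_of_mul_ι_mem (h := h.toSubmodule) hq.sup_eq_top (le_polyRepresentable _ _ hone)
      (fun v hv H hH => mul_mem_polyRepresentable (hgen ⟨H, hH⟩) hv)
      (fun n hn => (pow_map_ι_le_Mspan_sup Q n).trans (sup_le (le_polyRepresentable _ _) hn))
  exact exists_sub_sum_range_mem_of_mem_polyRepresentable (hreps ▸ Submodule.mem_top)

theorem stmt14 (g : Type*) [LieRing g] [LieAlgebra ℝ g] [FiniteDimensional ℝ g]
    (h : LieSubalgebra ℝ g) (lam : h →ₗ[ℝ] ℝ)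
    (hlam : ∀ H₁ H₂ : h, lam ⁅H₁, H₂⁆ = 0)
    (q : Submodule ℝ g) (hq : IsCompl h.toSubmodule q)
    (p : ℕ) (Q : Module.Basis (Fin p) ℝ q)
    (u : UniversalEnvelopingAlgebra ℝ g) :
    ∃ (m : ℕ) (w : ℕ → UniversalEnvelopingAlgebra ℝ g),
      (∀ k, w k ∈ Mspan Q) ∧
      ∀ t : ℝ, u - (∑ k ∈ Finset.range (m + 1), t ^ k • w k) ∈ It h lam t :=
  stmt14_general g h lam q hq p Q u

end
end
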